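/- arXiv:1409.5259 — 8 statements merged into one kernel-verified Lean document; each statement's English description precedes it below -/
import Mathlib

section
/- There exists a finite set F of vectors g ∈ ℤ^n with g ≥ 0 such that Sg_{≥k}(A) = ⋃_{g ∈ F} (Ag + Sg(A)); that is, Sg_{≥k}(A) is a finite union of translated copies of the semigroup Sg(A) = A·(ℤ^n_{≥0}). -/
/-- Dickson-type basis lemma: any set of nonnegative integer vectors has a finite
subset of "minimal" elements below every element. -/
lemma dickson_basis {n : ℕ} (M : Set (Fin n → ℤ)) (hM : ∀ x ∈ M, 0 ≤ x) :
    ∃ F : Finset (Fin n → ℤ), ↑F ⊆ M ∧ ∀ m ∈ M, ∃ f ∈ F, f ≤ m := by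
  classical
  -- M is PWO: it is a subset of the image of ℕ^n under the monotone coercion
  have hmono : Monotone (fun (x : Fin n → ℕ) (i : Fin n) => (x i : ℤ)) := by
    intro a b hab i
    dsimp only
    exact_mod_cast hab i
  have hPWO : M.IsPWO := by
    haveI : IsWellOrder ℕ (· < ·) := inferInstance
    have h1 : (Set.univ : Set (Fin n → ℕ)).IsPWO := Set.isPWO_of_wellQuasiOrderedLE _
    refine (h1.image_of_monotone hmono).mono ?_
    intro x hx
    refine ⟨fun i => (x i).toNat, Set.mem_univ _, ?_⟩
    funext i
    exact Int.toNat_of_nonneg (hM x hx i)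
  -- minimal elements of M
  set Mn : Set (Fin n → ℤ) := {x ∈ M | ∀ y ∈ M, ¬ y < x} with hMn
  have hanti : IsAntichain (· ≤ ·) Mn := by
    intro a ha b hb hne hle
    exact hb.2 a ha.1 (lt_of_le_of_ne hle hne)
  have hfin : Mn.Finite :=
    hanti.finite_of_partiallyWellOrderedOn (hPWO.mono (fun x hx => hx.1))
  refine ⟨hfin.toFinset, ?_, ?_⟩
  · intro f hf
    exact (hfin.mem_toFinset.mp hf).1
  · intro m hm
    set S : Set (Fin n → ℤ) := {x ∈ M | x ≤ m} with hS
    have hSWF : S.IsWF := hPWO.isWF.mono (fun x hx => hx.1)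
    have hSne : S.Nonempty := ⟨m, hm, le_refl m⟩
    set μ := hSWF.min hSne with hμ
    have hμS : μ ∈ S := hSWF.min_mem hSne
    refine ⟨μ, hfin.mem_toFinset.mpr ⟨hμS.1, ?_⟩, hμS.2⟩
    intro y hy hlt
    exact hSWF.not_lt_min hSne ⟨hy, hlt.le.trans hμS.2⟩ hlt

/-- `b` has at least `k` distinct representations `A x = b`, `x ∈ ℤⁿ`, `x ≥ 0`. -/
def HasAtLeastKReps (d n k : ℕ) (A : Matrix (Fin d) (Fin n) ℤ) (b : Fin d → ℤ) : Prop :=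
  ∃ g : Fin k → (Fin n → ℤ), Function.Injective g ∧ ∀ i, 0 ≤ g i ∧ A.mulVec (g i) = b

/-- `Sg_{≥k}(A)` is a finite union of translated copies of
the semigroup `Sg(A) = A·(ℤⁿ_{≥0})`, with translations `A g`, `g ≥ 0`. -/
theorem stmt_2 (d n k : ℕ) (hd : 0 < d) (hn : 0 < n) (hk : 0 < k)
    (A : Matrix (Fin d) (Fin n) ℤ) :
    ∃ F : Finset (Fin n → ℤ), (∀ g ∈ F, 0 ≤ g) ∧
      {b : Fin d → ℤ | HasAtLeastKReps d n k A b} =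
        ⋃ g ∈ F, (fun b => A.mulVec g + b) '' (A.mulVec '' {x : Fin n → ℤ | 0 ≤ x}) := by
  classical
  set M : Set (Fin n → ℤ) :=
    {x | 0 ≤ x ∧ HasAtLeastKReps d n k A (A.mulVec x)} with hMdef
  obtain ⟨F, hFM, hFcov⟩ := dickson_basis M (fun x hx => hx.1)
  refine ⟨F, fun g hg => (hFM hg).1, ?_⟩
  ext b
  simp only [Set.mem_setOf_eq, Set.mem_iUnion, Set.mem_image]
  constructor
  · rintro ⟨g, hinj, hg⟩
    set x0 := g ⟨0, hk⟩ with hx0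
    have hx0M : x0 ∈ M := by
      refine ⟨(hg _).1, ?_⟩
      rw [(hg ⟨0, hk⟩).2]
      exact ⟨g, hinj, hg⟩
    obtain ⟨f, hfF, hfle⟩ := hFcov x0 hx0M
    refine ⟨f, hfF, A.mulVec (x0 - f), ⟨x0 - f, ?_, rfl⟩, ?_⟩
    · intro i; simpa using hfle i
    · rw [← Matrix.mulVec_add, ← (hg ⟨0, hk⟩).2]
      congr 1
      simp [x0]
  · rintro ⟨f, hfF, _, ⟨y, hy, rfl⟩, rfl⟩
    obtain ⟨g, hinj, hg⟩ := (hFM hfF).2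
    refine ⟨fun i => g i + y, ?_, fun i => ⟨?_, ?_⟩⟩
    · intro i j hij
      exact hinj (by simpa using hij)
    · intro t; exact add_nonneg ((hg i).1 t) (hy t)
    · rw [Matrix.mulVec_add, (hg i).2]
end

section
/- Assume the cone of A is pointed, i.e. the only x ∈ ℝ^n with x ≥ 0 and A x = 0 is x = 0. Then there exist finitely many pairs (h_i, S_i), i ∈ I, with h_i ∈ ℤ^d and S_i ⊆ {1, …, n}, such that Sg_{<k}(A) = ⋃_{i ∈ I} { h_i + Aλ : λ ∈ ℤ^n, λ ≥ 0, and λ_j = 0 for every j ∉ S_i }; that is, the set of k-holes is a finite union of translates of images under A of coordinate submonoids of ℤ^n_{≥0}. -/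
/-- The real cone generated by the columns of `A`. -/
def coneOf (d n : ℕ) (A : Matrix (Fin d) (Fin n) ℤ) : Set (Fin d → ℝ) :=
  {y | ∃ x : Fin n → ℝ, 0 ≤ x ∧ (A.map (Int.cast : ℤ → ℝ)).mulVec x = y}

/-- `Sg_{<k}(A) = (cone(A) ∩ ℤᵈ) \ Sg_{≥k}(A)`: the set of `k`-holes. -/
def SgLT (d n k : ℕ) (A : Matrix (Fin d) (Fin n) ℤ) : Set (Fin d → ℤ) :=
  {b | (fun i => (b i : ℝ)) ∈ coneOf d n A ∧ ¬ HasAtLeastKReps d n k A b}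



/-- A "piece": translate of a coordinate submonoid of ℕⁿ. -/
def Piece (n : ℕ) (p : (Fin n → ℕ) × Finset (Fin n)) : Set (Fin n → ℕ) :=
  {x | ∃ lam : Fin n → ℕ, (∀ j ∉ p.2, lam j = 0) ∧ x = p.1 + lam}

def Decomp (n : ℕ) (X : Set (Fin n → ℕ)) : Prop :=
  ∃ P : Finset ((Fin n → ℕ) × Finset (Fin n)), X = ⋃ p ∈ P, Piece n p

lemma decomp_biUnion {n : ℕ} {κ : Type*} [DecidableEq κ] (K : Finset κ) (f : κ → Set (Fin n → ℕ))
    (h : ∀ j ∈ K, Decomp n (f j)) : Decomp n (⋃ j ∈ K, f j) := by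
  classical
  choose P hP using h
  refine ⟨K.attach.biUnion (fun j => P j j.2), ?_⟩
  ext x
  simp only [Set.mem_iUnion, Finset.mem_biUnion, Finset.mem_attach, true_and, Subtype.exists]
  constructor
  · rintro ⟨j, hj, hx⟩
    rw [hP j hj] at hx
    simp only [Set.mem_iUnion] at hx
    obtain ⟨p, hp, hxp⟩ := hx
    exact ⟨p, ⟨j, hj, hp⟩, hxp⟩
  · rintro ⟨p, ⟨j, hj, hp⟩, hxp⟩
    refine ⟨j, hj, ?_⟩
    rw [hP j hj]
    simp only [Set.mem_iUnion]
    exact ⟨p, hp, hxp⟩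

lemma decomp_shift {n : ℕ} (X : Set (Fin n → ℕ)) (v : Fin n → ℕ) (h : Decomp n X) :
    Decomp n ((· + v) '' X) := by
  obtain ⟨P, hP⟩ := h
  refine ⟨P.image (fun p => (p.1 + v, p.2)), ?_⟩
  ext x
  simp only [Set.mem_image, hP, Set.mem_iUnion, Finset.mem_image]
  constructor
  · rintro ⟨y, ⟨p, hp, lam, hsupp, rfl⟩, rfl⟩
    refine ⟨(p.1 + v, p.2), ⟨p, hp, rfl⟩, lam, hsupp, ?_⟩
    funext i; simp only [Pi.add_apply]; omega
  · rintro ⟨q, ⟨p, hp, rfl⟩, lam, hsupp, rfl⟩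
    exact ⟨p.1 + lam, ⟨p, hp, lam, hsupp, rfl⟩, by funext i; simp; ring⟩

lemma upset_decomp (n : ℕ) (T : Finset (Fin n)) (E : Set (Fin n → ℕ))
    (hE : ∀ x y : Fin n → ℕ, x ≤ y → x ∈ E → y ∈ E) :
    Decomp n {x | x ∉ E ∧ ∀ j ∉ T, x j = 0} := by
  classical
  induction T using Finset.strongInduction generalizing E with
  | _ T ih =>
    by_cases hemp : ∀ m ∈ E, ∃ j ∉ T, m j ≠ 0
    · -- E ∩ cube(T) = ∅, whole cube is one piece
      refine ⟨{((0 : Fin n → ℕ), T)}, ?_⟩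
      ext x
      simp only [Set.mem_setOf_eq, Finset.mem_singleton, Set.mem_iUnion]
      constructor
      · rintro ⟨-, hx⟩
        exact ⟨((0 : Fin n → ℕ), T), rfl, x, fun j hj => hx j hj, by simp⟩
      · rintro ⟨p, rfl, lam, hsupp, rfl⟩
        refine ⟨fun hmem => ?_, fun j hj => by simpa using hsupp j hj⟩
        obtain ⟨j, hj, hne⟩ := hemp _ hmem
        exact hne (by simpa using hsupp j hj)
    · push_neg at hemp
      obtain ⟨m₀, hm₀E, hm₀T⟩ := hemp
      -- cover by slices {x j = c} for j ∈ T, c ≤ sup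
      set N := T.sup m₀ + 1 with hN
      have hcover : {x : Fin n → ℕ | x ∉ E ∧ ∀ j ∉ T, x j = 0}
          = ⋃ jc ∈ T ×ˢ Finset.range N,
              {x : Fin n → ℕ | (x ∉ E ∧ ∀ j ∉ T, x j = 0) ∧ x jc.1 = jc.2} := by
        ext x
        simp only [Set.mem_setOf_eq, Set.mem_iUnion, Finset.mem_product, Finset.mem_range]
        constructor
        · rintro ⟨hxE, hxT⟩
          -- find j ∈ T with x j < m₀ j
          by_cases hge : ∀ j ∈ T, m₀ j ≤ x j
          · exact absurd (hE m₀ x (fun j => by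
              by_cases hj : j ∈ T
              · exact hge j hj
              · simp [hm₀T j hj]) hm₀E) hxE
          · push_neg at hge
            obtain ⟨j, hjT, hlt⟩ := hge
            refine ⟨(j, x j), ⟨hjT, ?_⟩, ⟨hxE, hxT⟩, rfl⟩
            calc x j < m₀ j := hlt
              _ ≤ T.sup m₀ := Finset.le_sup hjT
              _ < N := by omega
        · rintro ⟨jc, -, h, -⟩
          exact h
      rw [hcover]
      refine decomp_biUnion _ _ ?_
      rintro ⟨j, c⟩ hjc
      simp only [Finset.mem_product, Finset.mem_range] at hjc
      obtain ⟨hjT, -⟩ := hjc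
      -- slice = shift by c·e_j of lower-dimensional problem
      set E' : Set (Fin n → ℕ) := {y | y + Pi.single j c ∈ E} with hE'
      have hE'mono : ∀ x y : Fin n → ℕ, x ≤ y → x ∈ E' → y ∈ E' :=
        fun x y hxy hx => hE _ _ (fun i => by
          simp only [Pi.add_apply]; exact Nat.add_le_add_right (hxy i) _) hx
      have key : {x : Fin n → ℕ | (x ∉ E ∧ ∀ i ∉ T, x i = 0) ∧ x j = c}
          = (· + Pi.single j c) '' {y | y ∉ E' ∧ ∀ i ∉ T.erase j, y i = 0} := by
        ext x
        simp only [Set.mem_setOf_eq, Set.mem_image, Finset.mem_erase]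
        constructor
        · rintro ⟨⟨hxE, hxT⟩, hxj⟩
          refine ⟨Function.update x j 0, ⟨?_, ?_⟩, ?_⟩
          · have : Function.update x j 0 + Pi.single j c = x := by
              funext i
              by_cases hij : i = j
              · subst hij; simp [hxj]
              · simp [Function.update_of_ne hij, Pi.single_eq_of_ne hij]
            simpa [E', this] using hxE
          · intro i hi
            by_cases hij : i = j
            · subst hij; simp
            · have : i ∉ T := by
                intro hiT; exact hi ⟨hij, hiT⟩
              simp [Function.update_of_ne hij, hxT i this]
          · funext i
            by_cases hij : i = j
            · subst hij; simp [hxj]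
            · simp [Function.update_of_ne hij, Pi.single_eq_of_ne hij]
        · rintro ⟨y, ⟨hyE, hyT⟩, rfl⟩
          refine ⟨⟨hyE, fun i hi => ?_⟩, ?_⟩
          · have hij : i ≠ j := fun h => hi (h ▸ hjT)
            simp [Pi.single_eq_of_ne hij, hyT i (fun h => hi h.2)]
          · have : y j = 0 := hyT j (by simp)
            simp [this]
      rw [key]
      exact decomp_shift _ _ (ih (T.erase j) (Finset.erase_ssubset hjT) E' hE'mono)

lemma mulVec_castR {d n : ℕ} (A : Matrix (Fin d) (Fin n) ℤ) (v : Fin n → ℤ) :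
    (fun i => ((A.mulVec v) i : ℝ)) = (A.map (Int.cast : ℤ → ℝ)).mulVec (fun j => (v j : ℝ)) := by
  funext i
  simp [Matrix.mulVec, dotProduct, Matrix.map_apply]


lemma reps_add {d n k : ℕ} (A : Matrix (Fin d) (Fin n) ℤ) (b : Fin d → ℤ)
    (hb : HasAtLeastKReps d n k A b) (y : Fin n → ℤ) (hy : 0 ≤ y) :
    HasAtLeastKReps d n k A (b + A.mulVec y) := by
  obtain ⟨g, hginj, hg⟩ := hb
  refine ⟨fun i => g i + y, fun i j hij => hginj (by
    funext r
    have := congrFun hij r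
    simpa using this), fun i => ⟨?_, ?_⟩⟩
  · intro r
    have := add_le_add ((hg i).1 r) (hy r)
    simpa using this
  · rw [Matrix.mulVec_add, (hg i).2]

/-- if `cone(A)` is pointed, the set of `k`-holes is a finite union of
translates of images under `A` of coordinate submonoids of `ℤⁿ_{≥0}`. -/
theorem stmt_3 (d n k : ℕ) (hd : 0 < d) (hn : 0 < n) (hk : 0 < k)
    (A : Matrix (Fin d) (Fin n) ℤ)
    (hpointed : ∀ x : Fin n → ℝ, 0 ≤ x → (A.map (Int.cast : ℤ → ℝ)).mulVec x = 0 → x = 0) :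
    ∃ (m : ℕ) (h : Fin m → (Fin d → ℤ)) (S : Fin m → Finset (Fin n)),
      SgLT d n k A =
        ⋃ i, {b : Fin d → ℤ | ∃ lam : Fin n → ℤ, 0 ≤ lam ∧ (∀ j ∉ S i, lam j = 0) ∧
          b = h i + A.mulVec lam} := by
  classical
  set AR := A.map (Int.cast : ℤ → ℝ) with hAR
  set M : ℤ := ∑ i : Fin d, ∑ j : Fin n, |A i j| with hM
  set I : Finset (Fin d → ℤ) :=
    (Fintype.piFinset (fun _ : Fin d => Finset.Icc (-M) M)).filter
      (fun t => (fun i => (t i : ℝ)) ∈ coneOf d n A) with hI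
  set E : (Fin d → ℤ) → Set (Fin n → ℕ) :=
    fun t => {x | HasAtLeastKReps d n k A (t + A.mulVec (fun j => (x j : ℤ)))} with hEdef
  have hEmono : ∀ t, ∀ x y : Fin n → ℕ, x ≤ y → x ∈ E t → y ∈ E t := by
    intro t x y hxy hx
    have h1 : HasAtLeastKReps d n k A
        ((t + A.mulVec (fun j => (x j : ℤ))) + A.mulVec (fun j => ((y j - x j : ℕ) : ℤ))) :=
      reps_add A _ hx _ (fun j => by positivity)
    have h2 : (t + A.mulVec (fun j => (x j : ℤ))) + A.mulVec (fun j => ((y j - x j : ℕ) : ℤ))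
        = t + A.mulVec (fun j => (y j : ℤ)) := by
      rw [add_assoc, ← Matrix.mulVec_add]
      have hv : ((fun j => ((x j : ℤ))) + fun j => (((y j - x j : ℕ) : ℤ))) = fun j => ((y j : ℤ)) := by
        funext j
        have hj := hxy j
        simp only [Pi.add_apply]
        push_cast [Nat.cast_sub hj]
        ring
      rw [hv]
    rw [h2] at h1
    exact h1
  have hdec : ∀ t, Decomp n {x | x ∉ E t} := by
    intro t
    have h := upset_decomp n Finset.univ (E t) (hEmono t)
    have : {x : Fin n → ℕ | x ∉ E t ∧ ∀ j ∉ (Finset.univ : Finset (Fin n)), x j = 0}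
        = {x | x ∉ E t} := by
      ext x; simp
    rwa [this] at h
  choose P hP using hdec
  set Q : Finset ((Fin d → ℤ) × ((Fin n → ℕ) × Finset (Fin n))) :=
    I.biUnion (fun t => (P t).image (fun p => (t, p))) with hQ
  set G : (Fin d → ℤ) × ((Fin n → ℕ) × Finset (Fin n)) → Set (Fin d → ℤ) :=
    fun q => {b | ∃ lam : Fin n → ℤ, 0 ≤ lam ∧ (∀ j ∉ q.2.2, lam j = 0) ∧
      b = (q.1 + A.mulVec (fun j => (q.2.1 j : ℤ))) + A.mulVec lam} with hG
  have main : SgLT d n k A = ⋃ q ∈ Q, G q := by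
    ext b
    simp only [Set.mem_iUnion, exists_prop]
    constructor
    · rintro ⟨⟨xr, hxr0, hxrA⟩, hnr⟩
      set qZ : Fin n → ℤ := fun j => ⌊xr j⌋ with hqZ
      have hqZ0 : ∀ j, 0 ≤ qZ j := fun j => Int.floor_nonneg.2 (hxr0 j)
      set qN : Fin n → ℕ := fun j => (qZ j).toNat with hqN
      have hqNZ : (fun j => ((qN j : ℤ))) = qZ := by
        funext j; exact Int.toNat_of_nonneg (hqZ0 j)
      set t : Fin d → ℤ := b - A.mulVec qZ with ht
      set frac : Fin n → ℝ := fun j => xr j - (⌊xr j⌋ : ℝ) with hfrac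
      have hfrac0 : 0 ≤ frac := fun j => by
        show (0:ℝ) ≤ xr j - (⌊xr j⌋ : ℝ)
        have := Int.floor_le (xr j)
        linarith
      have hfrac1 : ∀ j, frac j ≤ 1 := fun j => by
        show xr j - (⌊xr j⌋ : ℝ) ≤ 1
        have := Int.lt_floor_add_one (xr j)
        linarith
      have htR : (fun i => (t i : ℝ)) = AR.mulVec frac := by
        have h1 : (fun i => (t i : ℝ))
            = (fun i => (b i : ℝ)) - (fun i => ((A.mulVec qZ) i : ℝ)) := by
          funext i; simp [ht]
        rw [h1, ← hxrA, mulVec_castR, ← hAR, ← Matrix.mulVec_sub]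
        congr 1
      have htcone : (fun i => (t i : ℝ)) ∈ coneOf d n A := ⟨frac, hfrac0, htR.symm⟩
      have htbox : ∀ i, t i ∈ Finset.Icc (-M) M := by
        intro i
        have hb : |(t i : ℝ)| ≤ (M : ℝ) := by
          have : (t i : ℝ) = ∑ j, (A i j : ℝ) * frac j := by
            have := congrFun htR i
            simpa [AR, Matrix.mulVec, dotProduct, Matrix.map_apply] using this
          rw [this]
          calc |∑ j, (A i j : ℝ) * frac j| ≤ ∑ j, |(A i j : ℝ) * frac j| :=
                Finset.abs_sum_le_sum_abs _ _
            _ ≤ ∑ j, |(A i j : ℝ)| := by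
                refine Finset.sum_le_sum fun j _ => ?_
                rw [abs_mul, abs_of_nonneg (hfrac0 j)]
                calc |(A i j : ℝ)| * frac j ≤ |(A i j : ℝ)| * 1 := by
                      exact mul_le_mul_of_nonneg_left (hfrac1 j) (abs_nonneg _)
                  _ = |(A i j : ℝ)| := mul_one _
            _ ≤ (M : ℝ) := by
                rw [hM]
                push_cast
                refine Finset.single_le_sum (f := fun i => ∑ j, |(A i j : ℝ)|)
                  (fun i _ => Finset.sum_nonneg fun j _ => abs_nonneg _) (Finset.mem_univ i)
        have : |t i| ≤ M := by
          have := hb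
          rw [← Int.cast_abs] at this
          exact_mod_cast this
        rw [Finset.mem_Icc]
        exact abs_le.1 this
      have htI : t ∈ I := by
        rw [hI, Finset.mem_filter]
        exact ⟨Fintype.mem_piFinset.2 htbox, htcone⟩
      have hbt : b = t + A.mulVec qZ := by rw [ht]; ring
      have hqNE : qN ∉ E t := by
        intro hmem
        rw [hEdef] at hmem
        simp only [Set.mem_setOf_eq, hqNZ] at hmem
        rw [← hbt] at hmem
        exact hnr hmem
      have : qN ∈ ⋃ p ∈ P t, Piece n p := by rw [← hP t]; exact hqNE
      simp only [Set.mem_iUnion, exists_prop] at this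
      obtain ⟨p, hpP, lamN, hsupp, hqNeq⟩ := this
      refine ⟨(t, p), ?_, fun j => (lamN j : ℤ), fun j => Int.ofNat_nonneg _,
        fun j hj => by simp only []; rw [hsupp j hj]; rfl, ?_⟩
      · rw [hQ, Finset.mem_biUnion]
        exact ⟨t, htI, Finset.mem_image.2 ⟨p, hpP, rfl⟩⟩
      · rw [hbt]
        simp only [hG]
        rw [add_assoc, ← Matrix.mulVec_add]
        congr 1
        congr 1
        rw [← hqNZ]
        funext j
        rw [hqNeq]
        push_cast
        rfl
    · rintro ⟨q, hqQ, lam, hlam0, hsupp, rfl⟩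
      rw [hQ, Finset.mem_biUnion] at hqQ
      obtain ⟨t, htI, hq⟩ := hqQ
      rw [Finset.mem_image] at hq
      obtain ⟨p, hpP, rfl⟩ := hq
      set xN : Fin n → ℕ := fun j => p.1 j + (lam j).toNat with hxN
      have hxcast : (fun j => ((xN j : ℤ))) = (fun j => ((p.1 j : ℤ))) + lam := by
        funext j
        simp only [hxN, Pi.add_apply]
        push_cast [Int.toNat_of_nonneg (hlam0 j)]
        ring
      have hbform : (t + A.mulVec (fun j => ((p.1 j : ℤ)))) + A.mulVec lam
          = t + A.mulVec (fun j => ((xN j : ℤ))) := by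
        rw [add_assoc, ← Matrix.mulVec_add, hxcast]
      have hxPiece : xN ∈ Piece n p := by
        refine ⟨fun j => (lam j).toNat, fun j hj => by simp only []; rw [hsupp j hj]; rfl, rfl⟩
      have hxnE : xN ∉ E t := by
        have : xN ∈ ⋃ p' ∈ P t, Piece n p' := by
          simp only [Set.mem_iUnion, exists_prop]
          exact ⟨p, hpP, hxPiece⟩
        rw [← hP t] at this
        exact this
      have hnr : ¬ HasAtLeastKReps d n k A ((t + A.mulVec (fun j => ((p.1 j : ℤ)))) + A.mulVec lam) := by
        rw [hbform]
        exact hxnE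
      rw [hI, Finset.mem_filter] at htI
      obtain ⟨-, u, hu0, huA⟩ := htI
      refine ⟨⟨u + (fun j => ((xN j : ℝ))), ?_, ?_⟩, hnr⟩
      · intro j
        simp only [Pi.add_apply]
        exact add_nonneg (hu0 j) (by positivity)
      · have hcast : (fun i => ((A.mulVec (fun j => ((xN j : ℤ))) i : ℝ)))
            = AR.mulVec (fun j => ((xN j : ℝ))) := by
          rw [mulVec_castR, hAR]
          norm_cast
        rw [Matrix.mulVec_add, huA, hbform, ← hcast]
        funext i
        simp only [Pi.add_apply]
        push_cast
        ring
  refine ⟨Q.card, fun i => (Q.equivFin.symm i).1.1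
      + A.mulVec (fun j => (((Q.equivFin.symm i).1.2.1 j : ℤ))),
    fun i => (Q.equivFin.symm i).1.2.2, ?_⟩
  rw [main]
  ext b
  simp only [Set.mem_iUnion, exists_prop, Set.mem_setOf_eq]
  constructor
  · rintro ⟨q, hqQ, hbG⟩
    refine ⟨Q.equivFin ⟨q, hqQ⟩, ?_⟩
    simp only [Equiv.symm_apply_apply]
    exact hbG
  · rintro ⟨i, hi⟩
    exact ⟨(Q.equivFin.symm i).1, (Q.equivFin.symm i).2, hi⟩
end

section
/- Assume the cone of A is pointed, i.e. the only x ∈ ℝ^n with x ≥ 0 and A x = 0 is x = 0. Then every fundamental k-hole f of Sg(A) lies in the half-open zonotope P = {Aλ : λ ∈ ℝ^n, 0 ≤ λ_j < 1 for all j}; i.e. there exists λ ∈ [0,1)^n with f = Aλ. -/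
/-- The semigroup `Sg(A) = {A x : x ∈ ℤⁿ, x ≥ 0}`. -/
def SgOf (d n : ℕ) (A : Matrix (Fin d) (Fin n) ℤ) : Set (Fin d → ℤ) :=
  {b | ∃ x : Fin n → ℤ, 0 ≤ x ∧ A.mulVec x = b}

/-- A `k`-hole `f` is fundamental if there is no `k`-hole `h ≠ f` with `f - h ∈ Sg(A)`. -/
def IsFundamentalKHole (d n k : ℕ) (A : Matrix (Fin d) (Fin n) ℤ) (f : Fin d → ℤ) : Prop :=
  f ∈ SgLT d n k A ∧ ¬ ∃ h ∈ SgLT d n k A, h ≠ f ∧ f - h ∈ SgOf d n A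

/-- if `cone(A)` is pointed, every fundamental `k`-hole lies in the
half-open zonotope `{Aλ : λ ∈ [0,1)ⁿ}`. -/
theorem stmt_4 (d n k : ℕ) (hd : 0 < d) (hn : 0 < n) (hk : 0 < k)
    (A : Matrix (Fin d) (Fin n) ℤ)
    (hpointed : ∀ x : Fin n → ℝ, 0 ≤ x → (A.map (Int.cast : ℤ → ℝ)).mulVec x = 0 → x = 0)
    (f : Fin d → ℤ) (hf : IsFundamentalKHole d n k A f) :
    ∃ lam : Fin n → ℝ, (∀ j, 0 ≤ lam j ∧ lam j < 1) ∧
      (A.map (Int.cast : ℤ → ℝ)).mulVec lam = fun i => (f i : ℝ) := by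
  obtain ⟨⟨⟨lam, hlam0, hlamA⟩, hfnrep⟩, hfund⟩ := hf
  -- integer parts
  set m : Fin n → ℤ := fun j => ⌊lam j⌋ with hm
  have hm0 : (0 : Fin n → ℤ) ≤ m := fun j => Int.le_floor.2 (by simpa using hlam0 j)
  set h : Fin d → ℤ := f - A.mulVec m with hh
  -- real-cast of A.mulVec m
  have hcast : (A.map (Int.cast : ℤ → ℝ)).mulVec (fun j => (m j : ℝ))
      = fun i => ((A.mulVec m) i : ℝ) := by
    funext i
    simp [Matrix.mulVec, dotProduct, Matrix.map_apply]
  have hfract : (A.map (Int.cast : ℤ → ℝ)).mulVec (fun j => Int.fract (lam j))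
      = fun i => (h i : ℝ) := by
    funext i
    have h1 : (fun j => Int.fract (lam j)) = lam - fun j => (m j : ℝ) := by
      funext j
      show Int.fract (lam j) = lam j - ((⌊lam j⌋ : ℤ) : ℝ)
      rw [Int.fract]
    rw [h1, Matrix.mulVec_sub]
    have e1 := congrFun hlamA i
    have e2 := congrFun hcast i
    simp only [Pi.sub_apply] at e1 e2 ⊢
    rw [e1, e2]
    have e3 : h i = f i - A.mulVec m i := rfl
    rw [e3]; push_cast; ring
  -- h has < k reps (else f would too)
  have hhnrep : ¬ HasAtLeastKReps d n k A h := by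
    rintro ⟨g, hginj, hg⟩
    apply hfnrep
    refine ⟨fun i => g i + m, fun a b hab => hginj (by simpa using congrArg (· - m) hab), ?_⟩
    intro i
    refine ⟨le_trans (hg i).1 (by simp [hm0, le_add_of_nonneg_right]), ?_⟩
    rw [Matrix.mulVec_add, (hg i).2, hh]
    abel
  have hhcone : (fun i => (h i : ℝ)) ∈ coneOf d n A :=
    ⟨fun j => Int.fract (lam j), fun j => Int.fract_nonneg _, hfract⟩
  have hhSg : h ∈ SgLT d n k A := ⟨hhcone, hhnrep⟩
  have hfh : f - h ∈ SgOf d n A := ⟨m, hm0, by rw [hh]; abel⟩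
  by_cases hef : h = f
  · exact ⟨fun j => Int.fract (lam j), fun j => ⟨Int.fract_nonneg _, Int.fract_lt_one _⟩,
      by rw [hfract, hef]⟩
  · exact absurd ⟨h, hhSg, hef, hfh⟩ hfund
end

section
/- Assume the cone of A is pointed, i.e. the only x ∈ ℝ^n with x ≥ 0 and A x = 0 is x = 0. Then the set of fundamental k-holes of Sg(A) is finite. -/
-- cast commutes with mulVec
lemma cast_mulVec (d n : ℕ) (A : Matrix (Fin d) (Fin n) ℤ) (x : Fin n → ℤ) :
    (fun i => ((A.mulVec x) i : ℝ)) =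
      (A.map (Int.cast : ℤ → ℝ)).mulVec (fun j => (x j : ℝ)) := by
  funext i
  have := RingHom.map_mulVec (Int.castRingHom ℝ) A x i
  exact this

-- key lemma: a fundamental k-hole is A_ℝ x with 0 ≤ x ≤ 1
lemma fund_bounded (d n k : ℕ) (A : Matrix (Fin d) (Fin n) ℤ)
    (hpointed : ∀ x : Fin n → ℝ, 0 ≤ x → (A.map (Int.cast : ℤ → ℝ)).mulVec x = 0 → x = 0)
    (f : Fin d → ℤ) (hf : IsFundamentalKHole d n k A f) :
    ∃ x : Fin n → ℝ, 0 ≤ x ∧ x ≤ 1 ∧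
      (A.map (Int.cast : ℤ → ℝ)).mulVec x = fun i => (f i : ℝ) := by
  obtain ⟨⟨⟨x, hx0, hxA⟩, hnrep⟩, hnf⟩ := hf
  refine ⟨x, hx0, ?_, hxA⟩
  intro j
  by_contra hj1
  push_neg at hj1
  have hj1 : (1 : ℝ) ≤ x j := le_of_lt hj1
  -- the j-th column as integer vector
  set a : Fin d → ℤ := fun i => A i j with ha
  set h : Fin d → ℤ := f - a with hh
  -- column j is nonzero
  have hane : a ≠ 0 := by
    intro h0
    have hc : (A.map (Int.cast : ℤ → ℝ)).mulVec (Pi.single j 1) = 0 := by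
      funext i
      simp [Matrix.mulVec_single, Matrix.map_apply]
      have : A i j = 0 := congrFun h0 i
      simp [this]
    have := hpointed (Pi.single j 1) (by
      intro i; by_cases hij : i = j <;> simp [Pi.single_apply, hij]) hc
    have := congrFun this j
    simp at this
  -- h ∈ cone
  have hhcone : (fun i => (h i : ℝ)) ∈ coneOf d n A := by
    refine ⟨x - Pi.single j 1, ?_, ?_⟩
    · intro i
      by_cases hij : i = j
      · subst hij; simp [Pi.single_apply]; linarith
      · simpa [Pi.single_apply, hij] using hx0 i
    · rw [Matrix.mulVec_sub, hxA, Matrix.mulVec_single]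
      funext i
      simp [hh, ha, Matrix.map_apply]
  by_cases hrep : HasAtLeastKReps d n k A h
  · -- then f has at least k reps, contradiction
    obtain ⟨g, hginj, hg⟩ := hrep
    refine hnrep ⟨fun i => g i + Pi.single j 1, ?_, ?_⟩
    · intro i₁ i₂ he
      apply hginj
      have := congrArg (fun v => v - Pi.single j (1:ℤ)) he
      simpa using this
    · intro i
      refine ⟨?_, ?_⟩
      · intro l
        have h0 : (0:ℤ) ≤ g i l := by simpa using (hg i).1 l
        have hs : (0:ℤ) ≤ (Pi.single j 1 : Fin n → ℤ) l := by
          by_cases hlj : l = j <;> simp [Pi.single_apply, hlj]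
        simp only [Pi.zero_apply, Pi.add_apply]
        linarith
      · rw [Matrix.mulVec_add, (hg i).2, Matrix.mulVec_single]
        funext i'
        simp [hh, ha]
  · -- then h is a k-hole, contradicting fundamentality
    refine hnf ⟨h, ⟨hhcone, hrep⟩, ?_, ?_⟩
    · intro he
      exact hane (sub_eq_self.mp he)
    · refine ⟨Pi.single j 1, ?_, ?_⟩
      · intro i; by_cases hij : i = j <;> simp [Pi.single_apply, hij]
      · rw [Matrix.mulVec_single]
        funext i
        simp [hh, ha]


/-- if `cone(A)` is pointed, the set of fundamental `k`-holes is finite. -/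
theorem stmt_5 (d n k : ℕ) (hd : 0 < d) (hn : 0 < n) (hk : 0 < k)
    (A : Matrix (Fin d) (Fin n) ℤ)
    (hpointed : ∀ x : Fin n → ℝ, 0 ≤ x → (A.map (Int.cast : ℤ → ℝ)).mulVec x = 0 → x = 0) :
    {f : Fin d → ℤ | IsFundamentalKHole d n k A f}.Finite := by
  set M : ℤ := ∑ i : Fin d, ∑ j : Fin n, |A i j| with hM
  have hMnn : 0 ≤ M := Finset.sum_nonneg fun i _ =>
    Finset.sum_nonneg fun j _ => abs_nonneg _
  apply Set.Finite.subset (Set.finite_Icc (fun _ : Fin d => -M) (fun _ => M))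
  intro f hf
  obtain ⟨x, hx0, hx1, hxA⟩ := fund_bounded d n k A hpointed f hf
  have key : ∀ i, |f i| ≤ M := by
    intro i
    have hfi : (f i : ℝ) = ∑ j, (A i j : ℝ) * x j := by
      have := congrFun hxA i
      rw [← this]
      simp [Matrix.mulVec, dotProduct, Matrix.map_apply]
    have habs : |(f i : ℝ)| ≤ ∑ j, |(A i j : ℝ)| := by
      rw [hfi]
      calc |∑ j, (A i j : ℝ) * x j| ≤ ∑ j, |(A i j : ℝ) * x j| :=
            Finset.abs_sum_le_sum_abs _ _
        _ ≤ ∑ j, |(A i j : ℝ)| := by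
            apply Finset.sum_le_sum
            intro j _
            rw [abs_mul]
            have hx0j : (0:ℝ) ≤ x j := hx0 j
            have hx1j : x j ≤ (1:ℝ) := hx1 j
            have h1 : |x j| ≤ 1 := abs_le.2 ⟨by linarith, hx1j⟩
            calc |(A i j : ℝ)| * |x j| ≤ |(A i j : ℝ)| * 1 :=
                  mul_le_mul_of_nonneg_left h1 (abs_nonneg _)
              _ = |(A i j : ℝ)| := mul_one _
    have hsum : (∑ j, |(A i j : ℝ)|) ≤ (M : ℝ) := by
      push_cast [hM]
      calc (∑ j, |(A i j : ℝ)|) = ∑ j, ((|A i j| : ℤ) : ℝ) := by push_cast; ring_nf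
        _ ≤ ∑ i' : Fin d, ∑ j, ((|A i' j| : ℤ) : ℝ) := by
            apply Finset.single_le_sum (f := fun i' => ∑ j, ((|A i' j| : ℤ) : ℝ))
            · intro i' _
              exact Finset.sum_nonneg fun j _ => by positivity
            · exact Finset.mem_univ i
        _ = _ := by push_cast; ring_nf
    have : |(f i : ℝ)| ≤ (M : ℝ) := le_trans habs hsum
    exact_mod_cast (by rwa [← Int.cast_abs] at this : ((|f i| : ℤ) : ℝ) ≤ (M : ℝ))
  constructor
  · intro i; have := key i; have := abs_le.1 (key i); exact this.1
  · intro i; exact (abs_le.1 (key i)).2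
end

section
/- Assume the cone of A is pointed, i.e. the only x ∈ ℝ^n with x ≥ 0 and A x = 0 is x = 0. Then there exist a finite index set I, vectors h_i ∈ ℤ^d, and finitely generated submonoids M_i of (ℤ^d, +) (each containing 0, possibly trivial) such that Sg_{<k}(A) = ⋃_{i ∈ I} (h_i + M_i). -/
namespace Stmt6Aux

variable {d n : ℕ}

variable {n : ℕ}

/-- A "cell" in `Fin n → ℕ`: coordinates in `K` are pinned to `v`, others are `≥ v`. -/
def cell (p : Finset (Fin n) × (Fin n → ℕ)) : Set (Fin n → ℕ) :=
  {x | (∀ i ∈ p.1, x i = p.2 i) ∧ ∀ i ∉ p.1, p.2 i ≤ x i}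

/-- A set is `Good` if it is a finite union of cells. -/
def Good (X : Set (Fin n → ℕ)) : Prop :=
  ∃ l : List (Finset (Fin n) × (Fin n → ℕ)), X = ⋃ p ∈ l, cell p

lemma good_empty : Good (∅ : Set (Fin n → ℕ)) := ⟨[], by simp⟩

lemma good_univ : Good (Set.univ : Set (Fin n → ℕ)) := by
  refine ⟨[(∅, fun _ => 0)], ?_⟩
  ext x; simp [cell]

lemma good_union {X Y : Set (Fin n → ℕ)} (hX : Good X) (hY : Good Y) : Good (X ∪ Y) := by
  obtain ⟨l₁, rfl⟩ := hX; obtain ⟨l₂, rfl⟩ := hY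
  refine ⟨l₁ ++ l₂, ?_⟩
  ext x; simp [List.mem_append, or_and_right, exists_or, Set.mem_iUnion]

lemma cell_inter_cell (p q : Finset (Fin n) × (Fin n → ℕ)) :
    cell p ∩ cell q = ∅ ∨ cell p ∩ cell q = cell (p.1 ∪ q.1, p.2 ⊔ q.2) := by
  rcases Set.eq_empty_or_nonempty (cell p ∩ cell q) with h | ⟨x₀, hx₀p, hx₀q⟩
  · exact Or.inl h
  right
  obtain ⟨K, v⟩ := p; obtain ⟨L, w⟩ := q
  simp only [cell, Set.mem_setOf_eq] at hx₀p hx₀q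
  ext x
  simp only [cell, Set.mem_inter_iff, Set.mem_setOf_eq, Finset.mem_union, Pi.sup_apply]
  constructor
  · rintro ⟨⟨hp1, hp2⟩, ⟨hq1, hq2⟩⟩
    constructor
    · rintro i (hi | hi)
      · by_cases hiL : i ∈ L
        · rw [hp1 i hi, sup_eq_left.mpr]
          rw [← hp1 i hi, hq1 i hiL]
        · rw [hp1 i hi, sup_eq_left.mpr]
          exact le_trans (hq2 i hiL) (le_of_eq (hp1 i hi))
      · by_cases hiK : i ∈ K
        · rw [hq1 i hi, sup_eq_right.mpr]
          rw [← hq1 i hi, hp1 i hiK]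
        · rw [hq1 i hi, sup_eq_right.mpr]
          exact le_trans (hp2 i hiK) (le_of_eq (hq1 i hi))
    · intro i hi
      push_neg at hi
      exact sup_le (hp2 i hi.1) (hq2 i hi.2)
  · rintro ⟨h1, h2⟩
    have key : ∀ i, (i ∈ K → v i ⊔ w i = v i) ∧ (i ∈ L → v i ⊔ w i = w i) := by
      intro i
      constructor
      · intro hi
        by_cases hiL : i ∈ L
        · rw [sup_eq_left]; rw [← hx₀p.1 i hi, hx₀q.1 i hiL]
        · rw [sup_eq_left]; exact le_trans (hx₀q.2 i hiL) (le_of_eq (hx₀p.1 i hi))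
      · intro hi
        by_cases hiK : i ∈ K
        · rw [sup_eq_right]; rw [← hx₀q.1 i hi, hx₀p.1 i hiK]
        · rw [sup_eq_right]; exact le_trans (hx₀p.2 i hiK) (le_of_eq (hx₀q.1 i hi))
    refine ⟨⟨fun i hi => ?_, fun i hi => ?_⟩, ⟨fun i hi => ?_, fun i hi => ?_⟩⟩
    · rw [h1 i (Or.inl hi), (key i).1 hi]
    · by_cases hiL : i ∈ L
      · rw [h1 i (Or.inr hiL)]; exact le_sup_left
      · exact le_trans le_sup_left (h2 i (by push_neg; exact ⟨hi, hiL⟩))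
    · rw [h1 i (Or.inr hi), (key i).2 hi]
    · by_cases hiK : i ∈ K
      · rw [h1 i (Or.inl hiK)]; exact le_sup_right
      · exact le_trans le_sup_right (h2 i (by push_neg; exact ⟨hiK, hi⟩))

lemma good_cell (p : Finset (Fin n) × (Fin n → ℕ)) : Good (cell p) := ⟨[p], by simp⟩

lemma cell_inter_good {Y : Set (Fin n → ℕ)} (p : Finset (Fin n) × (Fin n → ℕ))
    (hY : Good Y) : Good (cell p ∩ Y) := by
  obtain ⟨l, rfl⟩ := hY
  induction l with
  | nil => simpa using good_empty
  | cons q l ih =>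
    have : cell p ∩ ⋃ r ∈ q :: l, cell r = (cell p ∩ cell q) ∪ (cell p ∩ ⋃ r ∈ l, cell r) := by
      ext x; simp [Set.mem_iUnion]; tauto
    rw [this]
    refine good_union ?_ ih
    rcases cell_inter_cell p q with h | h <;> rw [h]
    · exact good_empty
    · exact good_cell _

lemma good_inter {X Y : Set (Fin n → ℕ)} (hX : Good X) (hY : Good Y) : Good (X ∩ Y) := by
  obtain ⟨l, rfl⟩ := hX
  induction l with
  | nil => simpa using good_empty
  | cons q l ih =>
    have : (⋃ r ∈ q :: l, cell r) ∩ Y = (cell q ∩ Y) ∪ ((⋃ r ∈ l, cell r) ∩ Y) := by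
      ext x; simp [Set.mem_iUnion]; tauto
    rw [this]
    exact good_union (cell_inter_good q hY) ih

/-- the upper set generated by f -/
lemma good_up (f : Fin n → ℕ) : Good {x | f ≤ x} := by
  refine ⟨[(∅, f)], ?_⟩
  ext x; simp [cell, Pi.le_def]

lemma good_compl_up (f : Fin n → ℕ) : Good {x | ¬ f ≤ x} := by
  refine ⟨(List.finRange n).flatMap (fun i => (List.range (f i)).map
    (fun c => ({i}, fun j => if j = i then c else 0))), ?_⟩
  ext x
  simp only [Set.mem_setOf_eq, Set.mem_iUnion, List.mem_flatMap, List.mem_map, List.mem_finRange,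
    List.mem_range, true_and]
  constructor
  · intro h
    rw [Pi.le_def] at h; push_neg at h
    obtain ⟨i, hi⟩ := h
    refine ⟨_, ⟨i, ⟨x i, hi, rfl⟩⟩, ?_⟩
    constructor
    · intro j hj
      simp only [Finset.mem_singleton] at hj
      simp [hj]
    · intro j hj
      simp only [Finset.mem_singleton] at hj
      simp [hj]
  · rintro ⟨p, ⟨i, c, hc, rfl⟩, hmem, -⟩
    intro hle
    have h1 : x i = c := by simpa using hmem i (by simp)
    exact Nat.lt_irrefl _ (lt_of_le_of_lt (h1 ▸ hle i) hc)



def IsUpset (U : Set (Fin n → ℕ)) : Prop := ∀ u v : Fin n → ℕ, u ≤ v → u ∈ U → v ∈ U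

lemma exists_min_below {U : Set (Fin n → ℕ)} :
    ∀ u ∈ U, ∃ m ∈ U, (∀ v ∈ U, v ≤ m → v = m) ∧ m ≤ u := by
  have key : ∀ (N : ℕ) (u : Fin n → ℕ), (∑ i, u i) ≤ N → u ∈ U →
      ∃ m ∈ U, (∀ v ∈ U, v ≤ m → v = m) ∧ m ≤ u := by
    intro N
    induction N with
    | zero =>
      intro u h hu
      refine ⟨u, hu, fun v _ hvu => ?_, le_rfl⟩
      have hz : ∀ i, u i = 0 := by
        intro i
        have h2 : u i ≤ ∑ j, u j :=
          Finset.single_le_sum (f := u) (fun j _ => Nat.zero_le _) (Finset.mem_univ i)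
        omega
      funext i
      have h1 := Pi.le_def.mp hvu i
      have h2 := hz i
      omega
    | succ N ih =>
      intro u h hu
      by_cases hmin : ∀ v ∈ U, v ≤ u → v = u
      · exact ⟨u, hu, hmin, le_rfl⟩
      · push_neg at hmin
        obtain ⟨v, hv, hvu, hne⟩ := hmin
        have hexists : ∃ i, v i < u i := by
          by_contra hcon
          push_neg at hcon
          exact hne (funext fun i => le_antisymm (hvu i) (hcon i))
        obtain ⟨i0, hi0⟩ := hexists
        have hsum : ∑ i, v i < ∑ i, u i :=
          Finset.sum_lt_sum (fun i _ => hvu i) ⟨i0, Finset.mem_univ i0, hi0⟩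
        obtain ⟨m, hm, hmmin, hmv⟩ := ih v (by omega) hv
        exact ⟨m, hm, hmmin, le_trans hmv hvu⟩
  intro u hu
  exact key (∑ i, u i) u le_rfl hu

lemma upset_eq_basis {U : Set (Fin n → ℕ)} (hU : IsUpset U) :
    ∃ F : Finset (Fin n → ℕ), U = ⋃ f ∈ F, {x | f ≤ x} := by
  classical
  set Min : Set (Fin n → ℕ) := {u | u ∈ U ∧ ∀ v ∈ U, v ≤ u → v = u} with hMin
  have hanti : IsAntichain (· ≤ ·) Min := by
    rintro a ⟨haU, hamin⟩ b ⟨hbU, hbmin⟩ hab hle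
    exact hab (hbmin a haU hle)
  have hfin : Min.Finite :=
    hanti.finite_of_partiallyWellOrderedOn (Set.isPWO_of_wellQuasiOrderedLE Min)
  refine ⟨hfin.toFinset, ?_⟩
  ext x
  simp only [Set.mem_iUnion, Set.Finite.mem_toFinset, Set.mem_setOf_eq]
  constructor
  · intro hx
    obtain ⟨m, hm, hmmin, hmx⟩ := exists_min_below x hx
    exact ⟨m, ⟨hm, hmmin⟩, hmx⟩
  · rintro ⟨m, ⟨hmU, -⟩, hmx⟩
    exact hU m x hmx hmU

lemma good_biUnion_list {α : Type*} (l : List α) (f : α → Set (Fin n → ℕ))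
    (h : ∀ a ∈ l, Good (f a)) : Good (⋃ a ∈ l, f a) := by
  induction l with
  | nil => simpa using good_empty
  | cons a l ih =>
    have : (⋃ b ∈ a :: l, f b) = f a ∪ ⋃ b ∈ l, f b := by
      ext x; simp [Set.mem_iUnion]
    rw [this]
    exact good_union (h a (by simp)) (ih fun b hb => h b (List.mem_cons_of_mem a hb))

lemma good_biInter_list {α : Type*} (l : List α) (f : α → Set (Fin n → ℕ))
    (h : ∀ a ∈ l, Good (f a)) : Good (⋂ a ∈ l, f a) := by
  induction l with
  | nil => simpa using good_univ
  | cons a l ih =>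
    have : (⋂ b ∈ a :: l, f b) = f a ∩ ⋂ b ∈ l, f b := by
      ext x; simp [Set.mem_iInter]
    rw [this]
    exact good_inter (h a (by simp)) (ih fun b hb => h b (List.mem_cons_of_mem a hb))

lemma good_upset {U : Set (Fin n → ℕ)} (hU : IsUpset U) : Good U := by
  obtain ⟨F, rfl⟩ := upset_eq_basis hU
  have : (⋃ f ∈ F, {x : Fin n → ℕ | f ≤ x}) = ⋃ f ∈ F.toList, {x | f ≤ x} := by
    ext x; simp [Set.mem_iUnion]
  rw [this]
  exact good_biUnion_list _ _ (fun a _ => good_up a)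

lemma good_compl_upset {U : Set (Fin n → ℕ)} (hU : IsUpset U) : Good Uᶜ := by
  obtain ⟨F, rfl⟩ := upset_eq_basis hU
  have : (⋃ f ∈ F, {x : Fin n → ℕ | f ≤ x})ᶜ = ⋂ f ∈ F.toList, {x | ¬ f ≤ x} := by
    ext x; simp [Set.mem_iInter, Set.mem_iUnion]
  rw [this]
  exact good_biInter_list _ _ (fun a _ => good_compl_up a)



variable {d n : ℕ} (A : Matrix (Fin d) (Fin n) ℤ)

/-- cast a ℕ-vector to a ℤ-vector -/
def castVec (u : Fin n → ℕ) : Fin n → ℤ := fun i => (u i : ℤ)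

/-- cast a ℤ-vector to an ℝ-vector -/
def castR (b : Fin d → ℤ) : Fin d → ℝ := fun j => (b j : ℝ)

lemma castR_add (b c : Fin d → ℤ) : castR (b + c) = castR b + castR c := by
  funext j; simp [castR]

lemma castR_mulVec (w : Fin n → ℤ) :
    castR (A.mulVec w) = (A.map (Int.cast : ℤ → ℝ)).mulVec (fun i => (w i : ℝ)) := by
  funext j
  simp [castR, Matrix.mulVec, dotProduct]

def maskedCast (K : Finset (Fin n)) (y : Fin n → ℕ) : Fin n → ℤ :=
  fun i => if i ∈ K then 0 else (y i : ℤ)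

/-- the submonoid of `ℤ^d` generated by the columns of `A` outside `K` -/
def MK (K : Finset (Fin n)) : AddSubmonoid (Fin d → ℤ) where
  carrier := Set.range fun y : Fin n → ℕ => A.mulVec (maskedCast K y)
  zero_mem' := by
    refine ⟨fun _ => 0, ?_⟩
    have : maskedCast K (fun _ => 0) = (0 : Fin n → ℤ) := by
      funext i; simp [maskedCast]
    dsimp only
    rw [this, Matrix.mulVec_zero]
  add_mem' := by
    rintro _ _ ⟨y₁, rfl⟩ ⟨y₂, rfl⟩
    refine ⟨y₁ + y₂, ?_⟩
    have : maskedCast K (y₁ + y₂) = maskedCast K y₁ + maskedCast K y₂ := by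
      funext i; simp only [maskedCast, Pi.add_apply]
      by_cases h : i ∈ K <;> simp [h]
    dsimp only
    rw [this, Matrix.mulVec_add]

lemma maskedCast_eq_sum (K : Finset (Fin n)) (y : Fin n → ℕ) :
    maskedCast K y = ∑ i ∈ Kᶜ, y i • Pi.single i (1 : ℤ) := by
  funext j
  rw [Finset.sum_apply]
  by_cases h : j ∈ K
  · have h0 : ∀ i ∈ Kᶜ, (y i • (Pi.single i (1:ℤ) : Fin n → ℤ)) j = (0:ℤ) := by
      intro i hi
      have hne : i ≠ j := by
        intro e; subst e; exact (Finset.mem_compl.mp hi) h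
      simp [Pi.single_apply, hne.symm]
    rw [Finset.sum_eq_zero h0]
    simp [maskedCast, h]
  · rw [Finset.sum_eq_single j (fun i _ hij => by simp [Pi.single_apply, hij.symm])
      (fun hj => absurd (Finset.mem_compl.mpr h) hj)]
    simp [maskedCast, h]

lemma MK_fg (K : Finset (Fin n)) : (MK A K).FG := by
  rw [AddSubmonoid.fg_iff]
  refine ⟨(fun i => A.mulVec (Pi.single i (1:ℤ))) '' (Kᶜ : Finset (Fin n)), ?_, (Kᶜ : Finset (Fin n)).finite_toSet.image _⟩
  apply le_antisymm
  · rw [AddSubmonoid.closure_le]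
    rintro _ ⟨i, hi, rfl⟩
    refine ⟨fun j => if j = i then 1 else 0, ?_⟩
    dsimp only
    have : maskedCast K (fun j => if j = i then 1 else 0) = Pi.single i (1:ℤ) := by
      funext j
      have hiK : i ∉ K := by simpa using hi
      by_cases h : j = i
      · subst h; simp [maskedCast, hiK, Pi.single_apply]
      · by_cases hK : j ∈ K <;> simp [maskedCast, hK, h, Pi.single_apply]
    rw [this]
  · rintro _ ⟨y, rfl⟩
    dsimp only
    rw [maskedCast_eq_sum, ← Matrix.mulVecLin_apply, map_sum]
    apply AddSubmonoid.sum_mem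
    intro i hi
    rw [map_nsmul]
    apply AddSubmonoid.nsmul_mem
    apply AddSubmonoid.subset_closure
    exact ⟨i, by simpa using hi, by rw [Matrix.mulVecLin_apply]⟩

/-- the affine map from ℕ^n into ℤ^d -/
def phi (z : Fin d → ℤ) (u : Fin n → ℕ) : Fin d → ℤ := z + A.mulVec (castVec u)

lemma phi_image_cell (z : Fin d → ℤ) (p : Finset (Fin n) × (Fin n → ℕ)) :
    phi A z '' cell p = (fun x => phi A z p.2 + x) '' (MK A p.1 : Set (Fin d → ℤ)) := by
  obtain ⟨K, v⟩ := p
  dsimp only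
  ext b
  constructor
  · rintro ⟨x, ⟨hx1, hx2⟩, rfl⟩
    dsimp only at hx1 hx2
    refine ⟨A.mulVec (maskedCast K (fun i => x i - v i)), ⟨_, rfl⟩, ?_⟩
    have key : castVec x = castVec v + maskedCast K (fun i => x i - v i) := by
      funext i
      by_cases h : i ∈ K
      · simp [castVec, maskedCast, h, hx1 i h]
      · have := hx2 i h
        simp only [castVec, maskedCast, if_neg h, Pi.add_apply]
        omega
    simp only [phi, key, Matrix.mulVec_add]
    abel
  · rintro ⟨_, ⟨y, rfl⟩, rfl⟩
    refine ⟨v + fun i => if i ∈ K then 0 else y i, ⟨?_, ?_⟩, ?_⟩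
    · intro i hi; simp [hi]
    · intro i hi; simp [hi]
    · have key : castVec (v + fun i => if i ∈ K then 0 else y i)
          = castVec v + maskedCast K y := by
        funext i
        by_cases h : i ∈ K <;> simp [castVec, maskedCast, h]
      simp only [phi, key, Matrix.mulVec_add]
      abel


lemma castVec_le {u v : Fin n → ℕ} (h : u ≤ v) : castVec u ≤ castVec v := by
  intro i; simp only [castVec]; exact_mod_cast h i

lemma reps_upset (k : ℕ) (z : Fin d → ℤ) :
    IsUpset {u : Fin n → ℕ | HasAtLeastKReps d n k A (phi A z u)} := by
  rintro u v huv ⟨g, hginj, hg⟩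
  set w : Fin n → ℤ := castVec v - castVec u with hw
  have hw0 : 0 ≤ w := by
    intro i
    simp only [hw, Pi.sub_apply, Pi.zero_apply, sub_nonneg, castVec]
    exact_mod_cast huv i
  refine ⟨fun i => g i + w, ?_, fun i => ⟨?_, ?_⟩⟩
  · intro a b hab
    apply hginj
    have := congrArg (fun t => t - w) hab
    simpa using this
  · have := (hg i).1
    intro j
    exact add_nonneg (this j) (hw0 j)
  · rw [Matrix.mulVec_add, (hg i).2, hw, Matrix.mulVec_sub]
    simp only [phi]
    abel

lemma cone_upset (z : Fin d → ℤ) :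
    IsUpset {u : Fin n → ℕ | castR (phi A z u) ∈ coneOf d n A} := by
  rintro u v huv ⟨x, hx0, hxe⟩
  set wr : Fin n → ℝ := fun i => ((v i : ℝ) - (u i : ℝ)) with hwr
  refine ⟨x + wr, ?_, ?_⟩
  · intro i
    have h1 : (0:ℝ) ≤ x i := by have := hx0 i; simpa using this
    have h2 : (u i : ℝ) ≤ (v i : ℝ) := by exact_mod_cast huv i
    show (0:ℝ) ≤ x i + ((v i : ℝ) - (u i : ℝ))
    linarith
  · rw [Matrix.mulVec_add, hxe]
    have key : (A.map (Int.cast : ℤ → ℝ)).mulVec wr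
        = castR (A.mulVec (castVec v - castVec u)) := by
      rw [castR_mulVec]
      congr 1
      funext i
      simp [hwr, castVec]
    rw [key]
    funext j
    simp only [Pi.add_apply, castR, phi, Matrix.mulVec_sub, Pi.sub_apply, Matrix.mulVec]
    push_cast
    ring

/-- semilinear as a list of translated f.g. submonoids -/
def SemiL (X : Set (Fin d → ℤ)) : Prop :=
  ∃ l : List ((Fin d → ℤ) × AddSubmonoid (Fin d → ℤ)),
    (∀ p ∈ l, p.2.FG) ∧ X = ⋃ p ∈ l, (fun x => p.1 + x) '' (p.2 : Set (Fin d → ℤ))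

lemma semiL_empty : SemiL (∅ : Set (Fin d → ℤ)) := ⟨[], by simp, by simp⟩

lemma semiL_union {X Y : Set (Fin d → ℤ)} (hX : SemiL X) (hY : SemiL Y) : SemiL (X ∪ Y) := by
  obtain ⟨l₁, h₁, rfl⟩ := hX
  obtain ⟨l₂, h₂, rfl⟩ := hY
  refine ⟨l₁ ++ l₂, ?_, ?_⟩
  · intro p hp
    rcases List.mem_append.mp hp with h | h
    exacts [h₁ p h, h₂ p h]
  · ext x; simp [List.mem_append, or_and_right, exists_or, Set.mem_iUnion]

lemma semiL_biUnion_list {α : Type*} (l : List α) (f : α → Set (Fin d → ℤ))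
    (h : ∀ a ∈ l, SemiL (f a)) : SemiL (⋃ a ∈ l, f a) := by
  induction l with
  | nil => simpa using semiL_empty
  | cons a l ih =>
    have : (⋃ b ∈ a :: l, f b) = f a ∪ ⋃ b ∈ l, f b := by
      ext x; simp [Set.mem_iUnion]
    rw [this]
    exact semiL_union (h a (by simp)) (ih fun b hb => h b (List.mem_cons_of_mem a hb))

lemma semiL_piece (k : ℕ) (z : Fin d → ℤ) :
    SemiL (phi A z '' {u | phi A z u ∈ SgLT d n k A}) := by
  have hD : {u : Fin n → ℕ | phi A z u ∈ SgLT d n k A}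
      = {u | castR (phi A z u) ∈ coneOf d n A}
        ∩ {u | HasAtLeastKReps d n k A (phi A z u)}ᶜ := by
    ext u
    simp only [SgLT, Set.mem_setOf_eq, Set.mem_inter_iff, Set.mem_compl_iff]
    rfl
  have hGood : Good {u : Fin n → ℕ | phi A z u ∈ SgLT d n k A} := by
    rw [hD]
    exact good_inter (good_upset (cone_upset A z)) (good_compl_upset (reps_upset A k z))
  obtain ⟨l, hl⟩ := hGood
  rw [hl, Set.image_iUnion]
  simp only [Set.image_iUnion]
  refine semiL_biUnion_list l _ ?_
  intro p _
  refine ⟨[(phi A z p.2, MK A p.1)], by simpa using MK_fg A p.1, ?_⟩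
  simp [phi_image_cell]

/-- the bound for remainders -/
def BB : ℤ := ∑ j, ∑ i, |A j i|

/-- covering: every k-hole is `z + A u` with small `z` -/
lemma cover {k : ℕ} {b : Fin d → ℤ} (hb : b ∈ SgLT d n k A) :
    ∃ z ∈ Finset.Icc (fun _ => -BB A : Fin d → ℤ) (fun _ => BB A), ∃ u : Fin n → ℕ,
      phi A z u = b := by
  obtain ⟨x, hx0, hxe⟩ := hb.1
  set w : Fin n → ℤ := fun i => ⌊x i⌋ with hwdef
  have hw0 : ∀ i, 0 ≤ w i := fun i => Int.floor_nonneg.mpr (hx0 i)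
  set u : Fin n → ℕ := fun i => (w i).toNat with hudef
  have hcast : castVec u = w := by
    funext i; simp [castVec, hudef, Int.toNat_of_nonneg (hw0 i)]
  refine ⟨b - A.mulVec w, ?_, u, ?_⟩
  · rw [Finset.mem_Icc]
    have key : ∀ j, |b j - (A.mulVec w) j| ≤ BB A := by
      intro j
      have hreal : ((b j - (A.mulVec w) j : ℤ) : ℝ)
          = ∑ i, (A j i : ℝ) * Int.fract (x i) := by
        have hb : (b j : ℝ) = ∑ i, (A j i : ℝ) * x i := by
          have := congrFun hxe j
          simp only [Matrix.mulVec, dotProduct, Matrix.map_apply] at this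
          rw [← this]
        have hw : ((A.mulVec w) j : ℝ) = ∑ i, (A j i : ℝ) * (⌊x i⌋ : ℝ) := by
          simp only [Matrix.mulVec, dotProduct]
          push_cast
          rfl
        push_cast
        rw [hb, hw, ← Finset.sum_sub_distrib]
        congr 1
        funext i
        rw [Int.fract]
        ring
      have habs : |((b j - (A.mulVec w) j : ℤ) : ℝ)| ≤ ((BB A : ℤ) : ℝ) := by
        rw [hreal]
        calc |∑ i, (A j i : ℝ) * Int.fract (x i)| ≤ ∑ i, |(A j i : ℝ) * Int.fract (x i)| :=
              Finset.abs_sum_le_sum_abs _ _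
          _ ≤ ∑ i, |(A j i : ℝ)| := by
              apply Finset.sum_le_sum
              intro i _
              rw [abs_mul]
              have h1 : |Int.fract (x i)| ≤ 1 := by
                rw [abs_of_nonneg (Int.fract_nonneg _)]
                exact le_of_lt (Int.fract_lt_one _)
              nlinarith [abs_nonneg ((A j i : ℝ))]
          _ ≤ ((BB A : ℤ) : ℝ) := by
              have : ∑ i, |A j i| ≤ BB A :=
                Finset.single_le_sum (f := fun j => ∑ i, |A j i|)
                  (fun j _ => Finset.sum_nonneg fun i _ => abs_nonneg _) (Finset.mem_univ j)
              push_cast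
              exact_mod_cast this
      rw [← Int.cast_abs] at habs
      exact_mod_cast habs
    constructor
    · intro j
      have := key j
      simp only [Pi.sub_apply]
      have := abs_le.mp (key j)
      omega
    · intro j
      have := abs_le.mp (key j)
      simp only [Pi.sub_apply]
      omega
  · rw [phi, hcast]
    abel


end Stmt6Aux

open Stmt6Aux in
/-- if `cone(A)` is pointed, then `Sg_{<k}(A)` is a finite union of
translates `hᵢ + Mᵢ` of finitely generated submonoids `Mᵢ` of `ℤᵈ`. -/
theorem stmt_6 (d n k : ℕ) (hd : 0 < d) (hn : 0 < n) (hk : 0 < k)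
    (A : Matrix (Fin d) (Fin n) ℤ)
    (hpointed : ∀ x : Fin n → ℝ, 0 ≤ x → (A.map (Int.cast : ℤ → ℝ)).mulVec x = 0 → x = 0) :
    ∃ (m : ℕ) (h : Fin m → (Fin d → ℤ)) (M : Fin m → AddSubmonoid (Fin d → ℤ)),
      (∀ i, (M i).FG) ∧
      SgLT d n k A = ⋃ i, (fun x => h i + x) '' (M i : Set (Fin d → ℤ)) := by
  classical
  have hmain : SemiL (SgLT d n k A) := by
    have hcover : SgLT d n k A
        = ⋃ z ∈ (Finset.Icc (fun _ => -BB A : Fin d → ℤ) (fun _ => BB A)).toList,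
            phi A z '' {u | phi A z u ∈ SgLT d n k A} := by
      ext b
      simp only [Set.mem_iUnion, Finset.mem_toList]
      constructor
      · intro hb
        obtain ⟨z, hz, u, hu⟩ := cover A hb
        exact ⟨z, hz, u, by rw [Set.mem_setOf_eq, hu]; exact hb, hu⟩
      · rintro ⟨z, hz, u, hu, rfl⟩
        exact hu
    rw [hcover]
    exact semiL_biUnion_list _ _ (fun z _ => semiL_piece A k z)
  obtain ⟨l, hfg, hl⟩ := hmain
  refine ⟨l.length, fun i => (l.get i).1, fun i => (l.get i).2,
    fun i => hfg _ (l.get_mem i), ?_⟩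
  rw [hl]
  ext y
  simp only [Set.mem_iUnion]
  constructor
  · rintro ⟨p, hp, hy⟩
    obtain ⟨i, rfl⟩ := List.mem_iff_get.mp hp
    exact ⟨i, hy⟩
  · rintro ⟨i, hy⟩
    exact ⟨l.get i, l.get_mem i, hy⟩
end

section
/- Let v = A·𝟙 and let m ≥ 0 be an integer such that the vector A·(m𝟙) has at least k distinct representations. If t ≥ 0 is a real number such that every integer point in the interior of t·v + cone(A) lies in Sg(A) (i.e. has at least one representation), then every integer point in the interior of (t + m)·v + cone(A) lies in Sg_{≥k}(A) (i.e. has at least k distinct representations). In particular g_k(A) ≤ g_1(A) + m, where g_j(A) = min{t ≥ 0 : int(t·v + cone(A)) ∩ ℤ^d ⊆ Sg_{≥j}(A)}. -/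
/-- `g_k(A) ≤ g_1(A) + m`: let `v = A𝟙` and suppose `A(m𝟙)` has at
least `k` distinct representations. If every integer point interior to
`t·v + cone(A)` has at least one representation, then every integer point interior
to `(t+m)·v + cone(A)` has at least `k` distinct representations. -/
theorem stmt_10 (d n k m : ℕ) (hd : 0 < d) (hn : 0 < n) (hk : 0 < k)
    (A : Matrix (Fin d) (Fin n) ℤ)
    (hm : HasAtLeastKReps d n k A (A.mulVec (fun _ => (m : ℤ))))
    (t : ℝ) (ht : 0 ≤ t)
    (h1 : ∀ y : Fin d → ℤ,
      (fun i => (y i : ℝ)) ∈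
        interior ((fun z => (t • fun i => ((A.mulVec (fun _ => (1 : ℤ))) i : ℝ)) + z) ''
          coneOf d n A) →
      ∃ x : Fin n → ℤ, 0 ≤ x ∧ A.mulVec x = y) :
    ∀ y : Fin d → ℤ,
      (fun i => (y i : ℝ)) ∈
        interior ((fun z => ((t + m) • fun i => ((A.mulVec (fun _ => (1 : ℤ))) i : ℝ)) + z) ''
          coneOf d n A) →
      HasAtLeastKReps d n k A y := by
  intro y hy
  obtain ⟨g, hginj, hg⟩ := hm
  set vR : Fin d → ℝ := fun i => ((A.mulVec (fun _ => (1 : ℤ))) i : ℝ) with hvR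
  set w : Fin d → ℤ := A.mulVec (fun _ => (m : ℤ)) with hw
  have hwi : ∀ i, ((w i : ℤ) : ℝ) = (m : ℝ) * vR i := by
    intro i
    simp only [hw, hvR, Matrix.mulVec, dotProduct]
    push_cast
    rw [Finset.mul_sum]
    exact Finset.sum_congr rfl fun j _ => by ring
  -- rewrite the big set as a translate
  have hset : ((fun z => ((t + m) • vR) + z) '' coneOf d n A)
      = (fun z => ((m : ℝ) • vR) + z) '' ((fun z => (t • vR) + z) '' coneOf d n A) := by
    rw [← Set.image_comp]
    apply Set.image_congr'
    intro z
    simp only [Function.comp]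
    funext i
    simp [add_smul]
    ring
  rw [hset] at hy
  have hhom : (fun z => ((m : ℝ) • vR) + z)
      = ⇑(Homeomorph.addLeft ((m : ℝ) • vR)) := rfl
  rw [hhom, ← Homeomorph.image_interior] at hy
  obtain ⟨u, hu, huy⟩ := hy
  have hu' : u = fun i => ((y i - w i : ℤ) : ℝ) := by
    funext i
    have := congrFun huy i
    simp only [Homeomorph.coe_addLeft, Pi.add_apply, Pi.smul_apply, smul_eq_mul] at this
    push_cast
    rw [hwi i]
    linarith [this]
  rw [hu'] at hu
  obtain ⟨x0, hx0, hx0eq⟩ := h1 _ hu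
  refine ⟨fun i => x0 + g i, ?_, ?_⟩
  · intro i j hij
    apply hginj
    funext l
    have := congrFun hij l
    simpa using this
  · intro i
    refine ⟨fun l => add_nonneg (hx0 l) ((hg i).1 l), ?_⟩
    rw [Matrix.mulVec_add, hx0eq, (hg i).2]
    funext l
    simp [hw]
end

section
/- Let a₁, a₂, a₃ be integers with 1 < a₁ < a₂ < a₃ and gcd(a₁, a₂, a₃) = 1. Then there exists a nonnegative integer b with r(b) = 1 such that every nonnegative integer b′ with r(b′) = 0 satisfies b′ < b. Consequently g₀(a₁,a₂,a₃) < g₁(a₁,a₂,a₃), where g_j denotes the largest nonnegative integer that has exactly j representations. -/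
set_option maxHeartbeats 1000000

/-- `r(b)`: the number of representations of `b` as `a₁x₁ + a₂x₂ + a₃x₃` with
`x₁, x₂, x₃` nonnegative integers. -/
noncomputable def numReps3 (a₁ a₂ a₃ b : ℕ) : ℕ :=
  Set.ncard {x : ℕ × ℕ × ℕ | a₁ * x.1 + a₂ * x.2.1 + a₃ * x.2.2 = b}

/-- Auxiliary: `b` is representable. -/
def Rep3 (a₁ a₂ a₃ n : ℕ) : Prop := ∃ x y z : ℕ, a₁ * x + a₂ * y + a₃ * z = n

lemma rep3_add {a₁ a₂ a₃ m n : ℕ} (hm : Rep3 a₁ a₂ a₃ m) (hn : Rep3 a₁ a₂ a₃ n) :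
    Rep3 a₁ a₂ a₃ (m + n) := by
  obtain ⟨x, y, z, h⟩ := hm
  obtain ⟨x', y', z', h'⟩ := hn
  refine ⟨x + x', y + y', z + z', ?_⟩
  have e1 : a₁ * (x + x') = a₁ * x + a₁ * x' := by ring
  have e2 : a₂ * (y + y') = a₂ * y + a₂ * y' := by ring
  have e3 : a₃ * (z + z') = a₃ * z + a₃ * z' := by ring
  linarith

lemma finite_reps (a₁ a₂ a₃ b : ℕ) (h₁ : 0 < a₁) (h₂ : 0 < a₂) (h₃ : 0 < a₃) :
    {x : ℕ × ℕ × ℕ | a₁ * x.1 + a₂ * x.2.1 + a₃ * x.2.2 = b}.Finite := by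
  apply Set.Finite.subset (Set.finite_Iic ((b, b, b) : ℕ × ℕ × ℕ))
  rintro ⟨x, y, z⟩ h
  simp only [Set.mem_setOf_eq] at h
  have hx : x ≤ a₁ * x := Nat.le_mul_of_pos_left x h₁
  have hy : y ≤ a₂ * y := Nat.le_mul_of_pos_left y h₂
  have hz : z ≤ a₃ * z := Nat.le_mul_of_pos_left z h₃
  simp only [Set.mem_Iic, Prod.mk_le_mk]
  refine ⟨by linarith, by linarith, by linarith⟩

lemma numReps3_eq_zero_iff {a₁ a₂ a₃ : ℕ} (h₁ : 0 < a₁) (h₂ : 0 < a₂) (h₃ : 0 < a₃) (b : ℕ) :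
    numReps3 a₁ a₂ a₃ b = 0 ↔ ¬ Rep3 a₁ a₂ a₃ b := by
  rw [numReps3, Set.ncard_eq_zero (finite_reps a₁ a₂ a₃ b h₁ h₂ h₃),
    Set.eq_empty_iff_forall_notMem]
  constructor
  · rintro h ⟨x, y, z, hx⟩
    exact h (x, y, z) hx
  · rintro h ⟨x, y, z⟩ hx
    exact h ⟨x, y, z, hx⟩

lemma two_le_numReps3_iff {a₁ a₂ a₃ : ℕ} (h₁ : 0 < a₁) (h₂ : 0 < a₂) (h₃ : 0 < a₃) (b : ℕ) :
    2 ≤ numReps3 a₁ a₂ a₃ b ↔ ∃ u v : ℕ × ℕ × ℕ,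
      a₁ * u.1 + a₂ * u.2.1 + a₃ * u.2.2 = b ∧
      a₁ * v.1 + a₂ * v.2.1 + a₃ * v.2.2 = b ∧ u ≠ v := by
  have : (2 : ℕ) ≤ numReps3 a₁ a₂ a₃ b ↔ 1 < numReps3 a₁ a₂ a₃ b := Iff.rfl
  rw [this, numReps3, Set.one_lt_ncard_iff (finite_reps a₁ a₂ a₃ b h₁ h₂ h₃)]
  simp only [Set.mem_setOf_eq]

lemma exists_mod (p q n : ℕ) (hp : 0 < p) (h : Nat.Coprime q p) :
    ∃ y, y < p ∧ (q * y) % p = n % p := by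
  haveI : NeZero p := ⟨hp.ne'⟩
  refine ⟨((n : ZMod p) * (q : ZMod p)⁻¹).val, ZMod.val_lt _, ?_⟩
  have hv : ((((n : ZMod p) * (q : ZMod p)⁻¹).val : ℕ) : ZMod p)
      = (n : ZMod p) * (q : ZMod p)⁻¹ := ZMod.natCast_rightInverse _
  have h2 : ((q * ((n : ZMod p) * (q : ZMod p)⁻¹).val : ℕ) : ZMod p) = (n : ZMod p) := by
    push_cast
    rw [hv]
    calc (q : ZMod p) * ((n : ZMod p) * (q : ZMod p)⁻¹)
        = ((q : ZMod p) * (q : ZMod p)⁻¹) * (n : ZMod p) := by ring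
      _ = (n : ZMod p) := by rw [ZMod.coe_mul_inv_eq_one q h, one_mul]
  exact (ZMod.natCast_eq_natCast_iff _ _ _).mp h2

lemma rep2_of_ge {p q : ℕ} (hp : 0 < p) (hq : 0 < q) (h : Nat.Coprime p q)
    {n : ℕ} (hn : (p - 1) * (q - 1) ≤ n) : ∃ x y, p * x + q * y = n := by
  obtain ⟨y, hy, hmod⟩ := exists_mod p q n hp h.symm
  have hmodEq : q * y ≡ n [MOD p] := hmod
  have hqy : q * y ≤ n := by
    by_contra hlt
    push_neg at hlt
    have hd : p ∣ q * y - n := (Nat.modEq_iff_dvd' hlt.le).mp hmodEq.symm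
    obtain ⟨m, hm⟩ := hd
    have hm' : q * y = p * m + n := by omega
    have hm1 : 1 ≤ m := by
      rcases Nat.eq_zero_or_pos m with h0 | h1
      · subst h0; simp at hm'; omega
      · exact h1
    have hy1 : q * y ≤ q * (p - 1) := mul_le_mul_right (by omega) q
    have hexp : q * (p - 1) = (p - 1) * (q - 1) + (p - 1) := by
      have hq1 : q - 1 + 1 = q := by omega
      calc q * (p - 1) = (p - 1) * (q - 1 + 1) := by rw [hq1, mul_comm]
        _ = (p - 1) * (q - 1) + (p - 1) := by ring
    have hpm : p * 1 ≤ p * m := mul_le_mul_right hm1 p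
    have hp1 : p * 1 = p := mul_one p
    have hple : p - 1 < p := by omega
    linarith
  have hd : p ∣ n - q * y := (Nat.modEq_iff_dvd' hqy).mp hmodEq
  obtain ⟨m, hm⟩ := hd
  exact ⟨m, y, by omega⟩

lemma popoviciu {p q : ℕ} (hp : 0 < p) (hq : 0 < q) (h : Nat.Coprime p q)
    {n : ℕ} (hnot : ¬ ∃ x y, p * x + q * y = n) :
    ∃ x y, n + p * (x + 1) + q * (y + 1) = p * q := by
  obtain ⟨y₀, hy₀, hmod⟩ := exists_mod p q n hp h.symm
  have hmodEq : q * y₀ ≡ n [MOD p] := hmod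
  rcases le_or_gt (q * y₀) n with hle | hlt
  · exfalso
    obtain ⟨m, hm⟩ := (Nat.modEq_iff_dvd' hle).mp hmodEq
    exact hnot ⟨m, y₀, by omega⟩
  · have hy₀1 : 1 ≤ y₀ := by
      rcases Nat.eq_zero_or_pos y₀ with h0 | h1
      · subst h0; simp at hlt
      · exact h1
    obtain ⟨m, hm⟩ := (Nat.modEq_iff_dvd' hlt.le).mp hmodEq.symm
    have hm1 : 1 ≤ m := by
      rcases Nat.eq_zero_or_pos m with h0 | h1
      · subst h0; simp at hm; omega
      · exact h1
    refine ⟨m - 1, p - y₀ - 1, ?_⟩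
    have e1 : m - 1 + 1 = m := by omega
    have e2 : p - y₀ - 1 + 1 = p - y₀ := by omega
    rw [e1, e2]
    have hm' : q * y₀ = p * m + n := by omega
    have hy₀p : y₀ ≤ p := hy₀.le
    zify [hy₀p]
    zify at hm'
    linear_combination -hm'

/-- swapping the first two generators (and coordinates) preserves the count. -/
lemma numReps3_swap (a₁ a₂ a₃ b : ℕ) :
    numReps3 a₁ a₂ a₃ b = numReps3 a₂ a₁ a₃ b := by
  rw [numReps3, numReps3]
  have himg : {x : ℕ × ℕ × ℕ | a₂ * x.1 + a₁ * x.2.1 + a₃ * x.2.2 = b}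
      = (fun x : ℕ × ℕ × ℕ => (x.2.1, x.1, x.2.2)) ''
        {x : ℕ × ℕ × ℕ | a₁ * x.1 + a₂ * x.2.1 + a₃ * x.2.2 = b} := by
    ext ⟨x, y, z⟩
    simp only [Set.mem_setOf_eq, Set.mem_image]
    constructor
    · intro hmem
      exact ⟨(y, x, z), by simpa using by linarith, rfl⟩
    · rintro ⟨⟨u, v, w⟩, hm, heq⟩
      simp only [Prod.mk.injEq] at heq
      obtain ⟨rfl, rfl, rfl⟩ := heq
      simp only [Set.mem_setOf_eq] at hm
      linarith
  have hinj : Function.Injective (fun x : ℕ × ℕ × ℕ => (x.2.1, x.1, x.2.2)) := by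
    rintro ⟨a, b, c⟩ ⟨d, e, f⟩ h
    simp only [Prod.mk.injEq] at h
    simp [Prod.ext_iff]
    tauto
  rw [himg, Set.ncard_image_of_injective _ hinj]

lemma rep3_swap {a₁ a₂ a₃ n : ℕ} : Rep3 a₁ a₂ a₃ n ↔ Rep3 a₂ a₁ a₃ n := by
  constructor
  · rintro ⟨x, y, z, h⟩; exact ⟨y, x, z, by linarith⟩
  · rintro ⟨x, y, z, h⟩; exact ⟨y, x, z, by linarith⟩

lemma add_le_mul_succ {b c : ℕ} (hb : 0 < b) (hc : 0 < c) : b + c ≤ b * c + 1 := by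
  rcases b with _ | b0
  · omega
  rcases c with _ | c0
  · omega
  have he : (b0 + 1) * (c0 + 1) = b0 * c0 + b0 + c0 + 1 := by ring
  have h0 : 0 ≤ b0 * c0 := Nat.zero_le _
  linarith

/-- Key structural lemma: if `F` is not representable but `F + A` has at least two
representations, then `A = b(x+1) + c(y+1)` where `b = B/gcd B C`, `c = C/gcd B C`. -/
lemma SL {A B C F : ℕ} (hA : 0 < A) (hB : 0 < B) (hC : 0 < C)
    (hlt : A < B * (C / Nat.gcd B C))
    (hF : ¬ Rep3 A B C F)
    (h2 : 2 ≤ numReps3 A B C (F + A)) :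
    ∃ x y, A = (B / Nat.gcd B C) * (x + 1) + (C / Nat.gcd B C) * (y + 1) := by
  set g := Nat.gcd B C with hgdef
  have hg0 : 0 < g := Nat.gcd_pos_of_pos_left _ hB
  set b := B / g with hbdef
  set c := C / g with hcdef
  have hbg : g * b = B := Nat.mul_div_cancel' (Nat.gcd_dvd_left B C)
  have hcg : g * c = C := Nat.mul_div_cancel' (Nat.gcd_dvd_right B C)
  have hco : Nat.Coprime b c := Nat.coprime_div_gcd_div_gcd hg0
  have hb0 : 0 < b := by
    rcases Nat.eq_zero_or_pos b with h0 | h1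
    · rw [h0, mul_zero] at hbg; omega
    · exact h1
  have hc0 : 0 < c := by
    rcases Nat.eq_zero_or_pos c with h0 | h1
    · rw [h0, mul_zero] at hcg; omega
    · exact h1
  clear_value g b c
  rw [two_le_numReps3_iff hA hB hC] at h2
  obtain ⟨u, v, hu, hv, huv⟩ := h2
  have key : ∀ w : ℕ × ℕ × ℕ, A * w.1 + B * w.2.1 + C * w.2.2 = F + A → w.1 = 0 := by
    rintro ⟨x, y, z⟩ hw
    simp only at hw
    by_contra hx
    obtain ⟨k, rfl⟩ : ∃ k, x = k + 1 := ⟨x - 1, by omega⟩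
    apply hF
    refine ⟨k, y, z, ?_⟩
    have e : A * (k + 1) = A * k + A := by ring
    linarith
  obtain ⟨u1, P, Q⟩ := u
  obtain ⟨v1, P', Q'⟩ := v
  have hu0 : u1 = 0 := key _ hu
  have hv0 : v1 = 0 := key _ hv
  subst hu0; subst hv0
  simp only [mul_zero, zero_add] at hu hv
  have hPQ : (P, Q) ≠ (P', Q') := fun he => huv (by rw [he])
  -- main claim for ordered case
  have main : ∀ P Q P' Q' : ℕ, B * P + C * Q = F + A → B * P' + C * Q' = F + A →
      P' < P → ∃ x y, A = b * (x + 1) + c * (y + 1) := by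
    clear hu hv hPQ
    intro P Q P' Q' h1 h2' hlt'
    have hBP : B * (P' + 1) ≤ B * P := mul_le_mul_right (by omega) B
    have hBe : B * (P' + 1) = B * P' + B := by ring
    have hQQ : C * Q < C * Q' := by linarith
    have hQ : Q < Q' := Nat.lt_of_mul_lt_mul_left hQQ
    have e1 : b * P + c * Q = b * P' + c * Q' := by
      have e0 : g * (b * P + c * Q) = g * (b * P' + c * Q') := by
        have r1 : g * (b * P + c * Q) = (g * b) * P + (g * c) * Q := by ring
        have r2 : g * (b * P' + c * Q') = (g * b) * P' + (g * c) * Q' := by ring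
        rw [r1, r2, hbg, hcg]
        linarith
      exact Nat.eq_of_mul_eq_mul_left hg0 e0
    have hkey : b * (P - P') = c * (Q' - Q) := by
      zify [hlt'.le, hQ.le]
      zify at e1
      linarith
    have hdvd : c ∣ P - P' := by
      have hcb : c ∣ b * (P - P') := Dvd.intro (Q' - Q) hkey.symm
      exact (Nat.Coprime.dvd_of_dvd_mul_left hco.symm hcb)
    obtain ⟨t, ht⟩ := hdvd
    have ht1 : 1 ≤ t := by
      rcases Nat.eq_zero_or_pos t with h0 | hpos
      · rw [h0, mul_zero] at ht; omega
      · exact hpos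
    have hPc : c ≤ P := by
      have : c * 1 ≤ c * t := mul_le_mul_right ht1 c
      rw [mul_one] at this
      omega
    -- the gap B*c - A is not representable
    have hBcP : B * c ≤ B * P := mul_le_mul_right hPc B
    have hMrep : Rep3 A B C (B * (P - c) + C * Q) := ⟨0, P - c, Q, by simp⟩
    have hFdec : F = (B * (P - c) + C * Q) + (B * c - A) := by
      zify [hPc, hlt.le, hBcP]
      zify at h1
      linarith
    have hgap : ¬ Rep3 A B C (B * c - A) := by
      intro hrep
      exact hF (hFdec ▸ rep3_add hMrep hrep)
    rcases le_or_gt A (b * c) with hle | hgt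
    · have hnot2 : ¬ ∃ X Y, b * X + c * Y = b * c - A := by
        rintro ⟨X, Y, hXY⟩
        apply hgap
        refine ⟨g - 1, X, Y, ?_⟩
        rw [← hbg, ← hcg]
        have hgbc : A ≤ g * (b * c) := by
          calc A ≤ b * c := hle
            _ = 1 * (b * c) := (one_mul _).symm
            _ ≤ g * (b * c) := mul_le_mul_left hg0 _
        have hABc : A ≤ g * b * c := by rw [mul_assoc]; exact hgbc
        zify [hle, hg0, hABc]
        zify [hle] at hXY
        linear_combination (g : ℤ) * hXY
      obtain ⟨x, y, hxy⟩ := popoviciu hb0 hc0 hco hnot2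
      refine ⟨x, y, ?_⟩
      zify [hle] at hxy
      zify
      linarith
    · have hsum : b + c ≤ A := by
        have := add_le_mul_succ hb0 hc0
        linarith
      have hrge : (b - 1) * (c - 1) ≤ A - (b + c) := by
        zify [hsum, hb0, hc0]
        nlinarith [hgt]
      obtain ⟨x, y, hxy⟩ := rep2_of_ge hb0 hc0 hco hrge
      refine ⟨x, y, ?_⟩
      zify [hsum] at hxy
      zify
      linear_combination -hxy
  rcases Nat.lt_trichotomy P P' with hc1 | hc2 | hc3
  · exact main P' Q' P Q hv hu hc1
  · subst hc2
    exfalso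
    apply hPQ
    have : C * Q = C * Q' := by linarith
    have := Nat.eq_of_mul_eq_mul_left hC this
    simp [this]
  · exact main P Q P' Q' hu hv hc3

lemma combine (a₁ a₂ a₃ : ℕ) (h1 : 0 < a₁) (h2 : 0 < a₂) (h3 : 0 < a₃)
    (hgcd : Nat.gcd (Nat.gcd a₁ a₂) a₃ = 1)
    (P1 : ∃ x y, a₁ = (a₂ / Nat.gcd a₂ a₃) * (x + 1) + (a₃ / Nat.gcd a₂ a₃) * (y + 1))
    (P2 : ∃ u v, a₂ = (a₁ / Nat.gcd a₁ a₃) * (u + 1) + (a₃ / Nat.gcd a₁ a₃) * (v + 1)) :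
    False := by
  set d := Nat.gcd a₂ a₃ with hddef
  set e := Nat.gcd a₁ a₃ with hedef
  have hd2 : d ∣ a₂ := Nat.gcd_dvd_left _ _
  have hd3 : d ∣ a₃ := Nat.gcd_dvd_right _ _
  have he1 : e ∣ a₁ := Nat.gcd_dvd_left _ _
  have he3 : e ∣ a₃ := Nat.gcd_dvd_right _ _
  have hd0 : 0 < d := Nat.gcd_pos_of_pos_left _ h2
  have he0 : 0 < e := Nat.gcd_pos_of_pos_left _ h1
  have hde : Nat.Coprime d e := by
    have h' : Nat.gcd d e ∣ 1 := by
      rw [← hgcd]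
      exact Nat.dvd_gcd
        (Nat.dvd_gcd (dvd_trans (Nat.gcd_dvd_right d e) he1)
          (dvd_trans (Nat.gcd_dvd_left d e) hd2))
        (dvd_trans (Nat.gcd_dvd_left d e) hd3)
    exact Nat.dvd_one.mp h'
  obtain ⟨f, hf⟩ : d * e ∣ a₃ := Nat.Coprime.mul_dvd_of_dvd_of_dvd hde hd3 he3
  set h := a₁ / e with hhdef
  set g := a₂ / d with hgdef2
  have hh : e * h = a₁ := Nat.mul_div_cancel' he1
  have hgg : d * g = a₂ := Nat.mul_div_cancel' hd2
  clear_value d e h g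
  have hf1 : 1 ≤ f := by
    rcases Nat.eq_zero_or_pos f with h0 | hp
    · rw [h0, mul_zero] at hf; omega
    · exact hp
  have hh1 : 1 ≤ h := by
    rcases Nat.eq_zero_or_pos h with h0 | hp
    · rw [h0, mul_zero] at hh; omega
    · exact hp
  have hg1 : 1 ≤ g := by
    rcases Nat.eq_zero_or_pos g with h0 | hp
    · rw [h0, mul_zero] at hgg; omega
    · exact hp
  have h3d : a₃ / d = e * f := by
    rw [hf, mul_assoc, Nat.mul_div_cancel_left _ hd0]
  have h3e : a₃ / e = d * f := by
    rw [hf, show d * e * f = e * (d * f) by ring, Nat.mul_div_cancel_left _ he0]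
  obtain ⟨x, y, hP1⟩ := P1
  rw [h3d] at hP1
  obtain ⟨u, v, hP2⟩ := P2
  rw [h3e] at hP2
  -- hP1 : a₁ = g * (x+1) + (e*f) * (y+1), hP2 : a₂ = h * (u+1) + (d*f) * (v+1)
  have heg : Nat.Coprime e g := by
    have h' : Nat.gcd e g ∣ 1 := by
      rw [← hgcd]
      exact Nat.dvd_gcd
        (Nat.dvd_gcd (dvd_trans (Nat.gcd_dvd_left e g) he1)
          (dvd_trans (Nat.gcd_dvd_right e g) ⟨d, by rw [← hgg]; ring⟩))
        (dvd_trans (Nat.gcd_dvd_left e g) he3)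
    exact Nat.dvd_one.mp h'
  have hdh : Nat.Coprime d h := by
    have h' : Nat.gcd d h ∣ 1 := by
      rw [← hgcd]
      exact Nat.dvd_gcd
        (Nat.dvd_gcd (dvd_trans (Nat.gcd_dvd_right d h) ⟨e, by rw [← hh]; ring⟩)
          (dvd_trans (Nat.gcd_dvd_left d h) hd2))
        (dvd_trans (Nat.gcd_dvd_left d h) hd3)
    exact Nat.dvd_one.mp h'
  have hdvd1 : e ∣ g * (x + 1) := by
    have he1' : e ∣ a₁ := he1
    rw [hP1] at he1'
    have hef : e ∣ e * f * (y + 1) := Dvd.intro (f * (y + 1)) (by ring)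
    exact (Nat.dvd_add_iff_left hef).mpr he1'
  have hex : e ∣ x + 1 := heg.dvd_of_dvd_mul_left hdvd1
  obtain ⟨x₀, hx₀⟩ := hex
  have hx₀1 : 1 ≤ x₀ := by
    rcases Nat.eq_zero_or_pos x₀ with h0 | hp
    · rw [h0, mul_zero] at hx₀; omega
    · exact hp
  have hH : h = g * x₀ + f * (y + 1) := by
    have e0 : e * h = e * (g * x₀ + f * (y + 1)) := by
      rw [hh, hP1, hx₀]; ring
    exact Nat.eq_of_mul_eq_mul_left he0 e0
  have hdvd2 : d ∣ h * (u + 1) := by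
    have hd2' : d ∣ a₂ := hd2
    rw [hP2] at hd2'
    have hdf : d ∣ d * f * (v + 1) := Dvd.intro (f * (v + 1)) (by ring)
    exact (Nat.dvd_add_iff_left hdf).mpr hd2'
  have heu : d ∣ u + 1 := hdh.dvd_of_dvd_mul_left hdvd2
  obtain ⟨u₀, hu₀⟩ := heu
  have hu₀1 : 1 ≤ u₀ := by
    rcases Nat.eq_zero_or_pos u₀ with h0 | hp
    · rw [h0, mul_zero] at hu₀; omega
    · exact hp
  have hG : g = h * u₀ + f * (v + 1) := by
    have e0 : d * g = d * (h * u₀ + f * (v + 1)) := by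
      rw [hgg, hP2, hu₀]; ring
    exact Nat.eq_of_mul_eq_mul_left hd0 e0
  -- contradiction: h ≥ g + f ≥ h + 2f
  have i1 : g ≤ g * x₀ := Nat.le_mul_of_pos_right g hx₀1
  have i2 : h ≤ h * u₀ := Nat.le_mul_of_pos_right h hu₀1
  have i3 : f ≤ f * (y + 1) := Nat.le_mul_of_pos_right f (by omega)
  have i4 : f ≤ f * (v + 1) := Nat.le_mul_of_pos_right f (by omega)
  linarith

lemma all_rep_of_big {a₁ a₂ a₃ : ℕ} (h1 : 0 < a₁) (h2 : 0 < a₂) (h3 : 0 < a₃)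
    (hgcd : Nat.gcd (Nat.gcd a₁ a₂) a₃ = 1) :
    ∀ n, a₃ * Nat.gcd a₁ a₂ + a₁ * a₂ ≤ n → Rep3 a₁ a₂ a₃ n := by
  intro n hn
  set D := Nat.gcd a₁ a₂ with hDdef
  have hD0 : 0 < D := Nat.gcd_pos_of_pos_left _ h1
  have hD1 : D ∣ a₁ := Nat.gcd_dvd_left _ _
  have hD2 : D ∣ a₂ := Nat.gcd_dvd_right _ _
  have hα : D * (a₁ / D) = a₁ := Nat.mul_div_cancel' hD1
  have hβ : D * (a₂ / D) = a₂ := Nat.mul_div_cancel' hD2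
  set α := a₁ / D with hαdef
  set β := a₂ / D with hβdef
  have hco : Nat.Coprime α β := Nat.coprime_div_gcd_div_gcd hD0
  have hcoD : Nat.Coprime a₃ D := (Nat.coprime_comm.mp hgcd)
  clear_value D α β
  have hα1 : 1 ≤ α := by
    rcases Nat.eq_zero_or_pos α with h0 | hp
    · rw [h0, mul_zero] at hα; omega
    · exact hp
  have hβ1 : 1 ≤ β := by
    rcases Nat.eq_zero_or_pos β with h0 | hp
    · rw [h0, mul_zero] at hβ; omega
    · exact hp
  obtain ⟨z, hz, hmod⟩ := exists_mod D a₃ n hD0 hcoD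
  have hmodEq : a₃ * z ≡ n [MOD D] := hmod
  have hDn : a₃ * D ≤ n := by linarith [Nat.zero_le (a₁ * a₂)]
  have hzn : a₃ * z ≤ n := by
    have : a₃ * z ≤ a₃ * D := mul_le_mul_right hz.le a₃
    linarith
  obtain ⟨m, hm⟩ := (Nat.modEq_iff_dvd' hzn).mp hmodEq
  have hm' : n = D * m + a₃ * z := (Nat.sub_eq_iff_eq_add hzn).mp hm
  have hzD : a₃ * z ≤ a₃ * D := mul_le_mul_right hz.le a₃
  have hDm : a₁ * a₂ ≤ D * m := by linarith
  have ha12 : a₁ * a₂ = D * (α * (D * β)) := by rw [← hα, ← hβ]; ring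
  have hmge : α * (D * β) ≤ m := by
    rw [ha12] at hDm
    exact Nat.le_of_mul_le_mul_left hDm hD0
  have hmge2 : (α - 1) * (β - 1) ≤ m := by
    have s1 : (α - 1) * (β - 1) ≤ α * β := Nat.mul_le_mul (by omega) (by omega)
    have s2 : α * β ≤ α * (D * β) := by
      have : β ≤ D * β := Nat.le_mul_of_pos_left β hD0
      exact mul_le_mul_right this α
    linarith
  obtain ⟨X, Y, hXY⟩ := rep2_of_ge hα1 hβ1 hco hmge2
  refine ⟨X, Y, z, ?_⟩
  -- a₁ X + a₂ Y + a₃ z = D*(α X + β Y) + a₃ z = D*m + a₃ z = n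
  have : a₁ * X + a₂ * Y = D * m := by
    rw [← hα, ← hβ]
    calc D * α * X + D * β * Y = D * (α * X + β * Y) := by ring
      _ = D * m := by rw [hXY]
  linarith

/-- `g₀ < g₁` for `n = 3`: there is a `b` with exactly one
representation exceeding every `b'` with no representation. -/
theorem stmt_13 (a₁ a₂ a₃ : ℕ) (h₁ : 1 < a₁) (h₁₂ : a₁ < a₂) (h₂₃ : a₂ < a₃)
    (hgcd : Nat.gcd (Nat.gcd a₁ a₂) a₃ = 1) :
    ∃ b : ℕ, numReps3 a₁ a₂ a₃ b = 1 ∧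
      ∀ b' : ℕ, numReps3 a₁ a₂ a₃ b' = 0 → b' < b := by
  classical
  have h1 : 0 < a₁ := by omega
  have h2 : 0 < a₂ := by omega
  have h3 : 0 < a₃ := by omega
  have hbig := all_rep_of_big h1 h2 h3 hgcd
  set N := a₃ * Nat.gcd a₁ a₂ + a₁ * a₂ with hNdef
  set bound := N + a₁ * a₂ with hbounddef
  set P : ℕ → Prop := fun n => numReps3 a₁ a₂ a₃ n ≤ 1 with hPdef
  -- beyond bound, always at least two representations
  have htwo : ∀ n, bound < n → 2 ≤ numReps3 a₁ a₂ a₃ n := by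
    intro n hn
    obtain ⟨x, y, z, hxyz⟩ := hbig (n - a₁ * a₂) (by omega)
    rw [two_le_numReps3_iff h1 h2 h3]
    refine ⟨(x + a₂, y, z), (x, y + a₁, z), ?_, ?_, ?_⟩
    · simp only
      have e : a₁ * (x + a₂) = a₁ * x + a₁ * a₂ := by ring
      have hsub : a₁ * a₂ ≤ n := by omega
      omega
    · simp only
      have e : a₂ * (y + a₁) = a₂ * y + a₁ * a₂ := by ring
      omega
    · intro hcon
      simp only [Prod.mk.injEq] at hcon
      omega
  -- r(0) = 1
  have hzero : numReps3 a₁ a₂ a₃ 0 = 1 := by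
    have hset : {x : ℕ × ℕ × ℕ | a₁ * x.1 + a₂ * x.2.1 + a₃ * x.2.2 = 0}
        = {((0 : ℕ), (0 : ℕ), (0 : ℕ))} := by
      ext ⟨x, y, z⟩
      simp only [Set.mem_setOf_eq, Set.mem_singleton_iff, Prod.mk.injEq]
      constructor
      · intro hh
        have := Nat.add_eq_zero.mp hh
        have h1' := Nat.add_eq_zero.mp this.1
        have hx := Nat.mul_eq_zero.mp h1'.1
        have hy := Nat.mul_eq_zero.mp h1'.2
        have hz := Nat.mul_eq_zero.mp this.2
        omega
      · rintro ⟨rfl, rfl, rfl⟩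
        simp
    rw [numReps3, hset, Set.ncard_singleton]
  have hP0 : P 0 := by show numReps3 a₁ a₂ a₃ 0 ≤ 1; omega
  set B := Nat.findGreatest P bound with hBdef
  have hPB : P B := Nat.findGreatest_spec (Nat.zero_le bound) hP0
  have hle : ∀ n, P n → n ≤ B := by
    intro n hn
    refine Nat.le_findGreatest ?_ hn
    by_contra hcon
    push_neg at hcon
    have := htwo n hcon
    have hn' : numReps3 a₁ a₂ a₃ n ≤ 1 := hn
    omega
  have hgt : ∀ n, B < n → 2 ≤ numReps3 a₁ a₂ a₃ n := by
    intro n hn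
    by_contra hcon
    push_neg at hcon
    have : P n := show numReps3 a₁ a₂ a₃ n ≤ 1 by omega
    exact absurd (hle n this) (by omega)
  have hrB : numReps3 a₁ a₂ a₃ B = 1 := by
    rcases Nat.lt_or_ge (numReps3 a₁ a₂ a₃ B) 1 with h0 | hge
    · exfalso
      have hrB0 : numReps3 a₁ a₂ a₃ B = 0 := by omega
      have hFnot : ¬ Rep3 a₁ a₂ a₃ B := (numReps3_eq_zero_iff h1 h2 h3 B).mp hrB0
      -- apply SL twice
      have hlt₁ : a₁ < a₂ * (a₃ / Nat.gcd a₂ a₃) := by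
        have hdvd : Nat.gcd a₂ a₃ ∣ a₃ := Nat.gcd_dvd_right _ _
        have hpos : 0 < a₃ / Nat.gcd a₂ a₃ :=
          Nat.div_pos (Nat.le_of_dvd h3 hdvd) (Nat.gcd_pos_of_pos_left _ h2)
        calc a₁ < a₂ := h₁₂
          _ = a₂ * 1 := (mul_one _).symm
          _ ≤ a₂ * (a₃ / Nat.gcd a₂ a₃) := mul_le_mul_right hpos a₂
      have hlt₂ : a₂ < a₁ * (a₃ / Nat.gcd a₁ a₃) := by
        have hdvd : Nat.gcd a₁ a₃ ∣ a₃ := Nat.gcd_dvd_right _ _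
        have hdvd1 : Nat.gcd a₁ a₃ ∣ a₁ := Nat.gcd_dvd_left _ _
        have he : Nat.gcd a₁ a₃ * (a₃ / Nat.gcd a₁ a₃) = a₃ := Nat.mul_div_cancel' hdvd
        calc a₂ < a₃ := h₂₃
          _ = Nat.gcd a₁ a₃ * (a₃ / Nat.gcd a₁ a₃) := he.symm
          _ ≤ a₁ * (a₃ / Nat.gcd a₁ a₃) :=
            mul_le_mul_left (Nat.le_of_dvd h1 hdvd1) _
      have hS1 := SL h1 h2 h3 hlt₁ hFnot (hgt (B + a₁) (by omega))
      have hS2 : ∃ x y, a₂ = (a₁ / Nat.gcd a₁ a₃) * (x + 1) + (a₃ / Nat.gcd a₁ a₃) * (y + 1) := by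
        apply SL h2 h1 h3 hlt₂
        · intro hrep
          exact hFnot (rep3_swap.mpr hrep)
        · rw [← numReps3_swap]
          exact hgt (B + a₂) (by omega)
      exact combine a₁ a₂ a₃ h1 h2 h3 hgcd hS1 hS2
    · have hPB' : numReps3 a₁ a₂ a₃ B ≤ 1 := hPB
      omega
  refine ⟨B, hrB, ?_⟩
  intro b' hb'
  have hble : b' ≤ B := hle b' (show numReps3 a₁ a₂ a₃ b' ≤ 1 by omega)
  have hbne : b' ≠ B := by
    intro hcon
    rw [hcon, hrB] at hb'
    omega
  omega
end

section
/- Let a₁ < a₂ < ⋯ < a_n be positive integers, let k ≥ 1, and let b̄ ≥ 0 be an integer. Suppose that for every integer b with b̄ ≤ b ≤ b̄ + a₁ the equation Σ_{i=1}^n a_i x_i = b has at least k solutions in nonnegative integers x ∈ ℤ^n. Then for every integer b ≥ b̄ the equation Σ_{i=1}^n a_i x_i = b has at least k solutions in nonnegative integers. -/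
lemma sol_finite (n : ℕ) (a : Fin n → ℕ) (ha : ∀ i, 0 < a i) (b : ℕ) :
    {x : Fin n → ℕ | ∑ i, a i * x i = b}.Finite := by
  apply Set.Finite.subset (Set.Finite.pi (fun i : Fin n => Set.finite_Iic b))
  intro x hx
  simp only [Set.mem_pi, Set.mem_Iic, Set.mem_univ, forall_true_left]
  intro i
  have h1 : a i * x i ≤ b := hx ▸ Finset.single_le_sum (f := fun j => a j * x j) (fun j _ => Nat.zero_le _) (Finset.mem_univ i)
  calc x i ≤ a i * x i := Nat.le_mul_of_pos_left _ (ha i)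
    _ ≤ b := h1

/-- stopping criterion: let `a₁ < a₂ < ⋯ < a_n` be positive integers.
If every `b` with `b̄ ≤ b ≤ b̄ + a₁` admits at least `k` nonnegative integral
solutions of `Σ a_i x_i = b`, then so does every `b ≥ b̄`. -/
theorem stmt_19 (n : ℕ) (hn : 0 < n) (a : Fin n → ℕ) (ha : ∀ i, 0 < a i)
    (hmono : StrictMono a) (k : ℕ) (hk : 1 ≤ k) (bbar : ℕ)
    (hyp : ∀ b : ℕ, bbar ≤ b → b ≤ bbar + a ⟨0, hn⟩ →
      k ≤ Set.ncard {x : Fin n → ℕ | ∑ i, a i * x i = b}) :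
    ∀ b : ℕ, bbar ≤ b →
      k ≤ Set.ncard {x : Fin n → ℕ | ∑ i, a i * x i = b} := by
  intro b
  induction b using Nat.strong_induction_on with
  | _ b ih =>
    intro hb
    by_cases hle : b ≤ bbar + a ⟨0, hn⟩
    · exact hyp b hb hle
    · push_neg at hle
      set i0 : Fin n := ⟨0, hn⟩
      have ha0 : 0 < a i0 := ha i0
      have hb' : bbar ≤ b - a i0 := by omega
      have hlt : b - a i0 < b := by omega
      have hkey := ih (b - a i0) hlt hb'
      -- inject solutions of b - a i0 into solutions of b
      set f : (Fin n → ℕ) → (Fin n → ℕ) := fun x => Function.update x i0 (x i0 + 1)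
      have hfinj : Function.Injective f := by
        intro x y hxy
        funext j
        by_cases hj : j = i0
        · subst hj
          have := congrFun hxy i0
          simpa [f, Function.update_self] using this
        · have := congrFun hxy j
          simpa [f, Function.update_of_ne hj] using this
      have himg : f '' {x : Fin n → ℕ | ∑ i, a i * x i = b - a i0}
          ⊆ {x : Fin n → ℕ | ∑ i, a i * x i = b} := by
        rintro _ ⟨x, hx, rfl⟩
        simp only [Set.mem_setOf_eq] at hx ⊢
        have hsum : ∑ i, a i * (f x) i = (∑ i, a i * x i) + a i0 := by
          rw [Finset.sum_eq_sum_sdiff_singleton_add (Finset.mem_univ i0),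
              Finset.sum_eq_sum_sdiff_singleton_add (Finset.mem_univ i0) (fun i => a i * x i)]
          have h1 : ∀ i ∈ Finset.univ \ {i0}, a i * (f x) i = a i * x i := by
            intro i hi
            simp only [Finset.mem_sdiff, Finset.mem_singleton] at hi
            simp [f, Function.update_of_ne hi.2]
          rw [Finset.sum_congr rfl h1]
          simp [f, Function.update_self, Nat.mul_add]
          ring
        rw [hsum, hx]
        exact Nat.sub_add_cancel (le_of_lt (lt_of_le_of_lt (Nat.le_add_left _ _) hle))
      calc k ≤ ({x : Fin n → ℕ | ∑ i, a i * x i = b - a i0}).ncard := hkey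
        _ = (f '' {x : Fin n → ℕ | ∑ i, a i * x i = b - a i0}).ncard :=
            (Set.ncard_image_of_injective _ hfinj).symm
        _ ≤ ({x : Fin n → ℕ | ∑ i, a i * x i = b}).ncard :=
            Set.ncard_le_ncard himg (sol_finite n a ha b)
end
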